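/- arXiv:math/0701866 — 10 statements merged into one kernel-verified Lean document; each statement's English description precedes it below -/
import Mathlib

section
/- Let n ≥ 2. Let C̄_n ⊆ ℝ^{(n−1)×(n−1)} be the convex cone generated by the matrices P̄ − Ī, where P ranges over all n×n permutation matrices, P̄ denotes the upper-left (n−1)×(n−1) submatrix of P, and Ī is the (n−1)×(n−1) identity matrix. Let D̄_n ⊆ ℝ^{(n−1)×(n−1)} be the convex cone generated by the matrices M̄_{i,j} for all i ≠ j in [n]. Then D̄_n is the dual cone of C̄_n, i.e., D̄_n = {Y ∈ ℝ^{(n−1)×(n−1)} : ⟨X, Y⟩ ≥ 0 for all X ∈ C̄_n}. -/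
open Finset

/-- The matrix `M̄_{i,j}` (for `i ≠ j` in `[n]`, with the last index playing the role of `n`). -/
def Mbar (n : ℕ) (i j : Fin n) : Matrix (Fin (n - 1)) (Fin (n - 1)) ℝ :=
  Matrix.of fun a b =>
    if (a : ℕ) = (i : ℕ) ∧ (b : ℕ) = (j : ℕ) then 1
    else if (a : ℕ) = (i : ℕ) ∧ (j : ℕ) = n - 1 then -1
    else if (i : ℕ) = n - 1 ∧ (b : ℕ) = (j : ℕ) then -1
    else 0

/-- The convex cone generated by a finite family of vectors: all nonnegative combinations. -/
def coneOf {ι : Type*} [Fintype ι] {E : Type*} [AddCommMonoid E] [Module ℝ E]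
    (v : ι → E) : Set E :=
  {x | ∃ lam : ι → ℝ, (∀ k, 0 ≤ lam k) ∧ x = ∑ k, lam k • v k}

/-- The real permutation matrix of `σ`, with `1` in positions `(i, σ i)`. -/
def permMatR (n : ℕ) (σ : Equiv.Perm (Fin n)) : Matrix (Fin n) (Fin n) ℝ :=
  Matrix.of fun i j => if σ i = j then 1 else 0

/-- The upper-left `(n-1) × (n-1)` submatrix. -/
def truncate (n : ℕ) (A : Matrix (Fin n) (Fin n) ℝ) : Matrix (Fin (n - 1)) (Fin (n - 1)) ℝ :=
  A.submatrix (Fin.castLE (Nat.sub_le n 1)) (Fin.castLE (Nat.sub_le n 1))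

/-- Entrywise dot product of two real matrices. -/
def mdot {m k : Type*} [Fintype m] [Fintype k] (X Y : Matrix m k ℝ) : ℝ :=
  ∑ i, ∑ j, X i j * Y i j


/- ### Auxiliary machinery ### -/


variable {N : ℕ}

/-- Bellman–Ford value function: `BF w k j` is the min weight of a walk of length `≤ k`
ending at `j`, starting anywhere, where a step from `x` to `y` costs `w y x`. -/
noncomputable def BF [NeZero N] (w : Fin N → Fin N → ℝ) : ℕ → Fin N → ℝ
  | 0 => fun _ => 0
  | (k+1) => fun j =>
      min (BF w k j) (Finset.univ.inf' Finset.univ_nonempty fun i => BF w k i + w j i)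

lemma BF_succ_le_self [NeZero N] (w : Fin N → Fin N → ℝ) (k : ℕ) (j : Fin N) :
    BF w (k+1) j ≤ BF w k j := min_le_left _ _

lemma BF_succ_le [NeZero N] (w : Fin N → Fin N → ℝ) (k : ℕ) (i j : Fin N) :
    BF w (k+1) j ≤ BF w k i + w j i :=
  le_trans (min_le_right _ _) (Finset.inf'_le _ (mem_univ i))

lemma BF_anti [NeZero N] (w : Fin N → Fin N → ℝ) (j : Fin N) :
    Antitone (fun k => BF w k j) :=
  antitone_nat_of_succ_le (fun k => BF_succ_le_self w k j)

lemma BF_le_walk [NeZero N] (w : Fin N → Fin N → ℝ) :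
    ∀ (k : ℕ) (q : ℕ → Fin N), BF w k (q k) ≤ ∑ t ∈ range k, w (q (t+1)) (q t) := by
  intro k
  induction k with
  | zero => intro q; simp [BF]
  | succ k ih =>
    intro q
    rw [Finset.sum_range_succ]
    calc BF w (k+1) (q (k+1)) ≤ BF w k (q k) + w (q (k+1)) (q k) := BF_succ_le w k _ _
    _ ≤ _ := by have := ih q; linarith

lemma BF_exists_walk [NeZero N] (w : Fin N → Fin N → ℝ) :
    ∀ (k : ℕ) (j : Fin N), ∃ k' ≤ k, ∃ q : ℕ → Fin N, q k' = j ∧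
      BF w k j = ∑ t ∈ range k', w (q (t+1)) (q t) := by
  intro k
  induction k with
  | zero => intro j; exact ⟨0, le_refl _, fun _ => j, rfl, by simp [BF]⟩
  | succ k ih =>
    intro j
    rcases le_or_gt (BF w k j) (Finset.univ.inf' Finset.univ_nonempty fun i => BF w k i + w j i)
      with h | h
    · obtain ⟨k', hk', q, hq, hval⟩ := ih j
      exact ⟨k', le_trans hk' (Nat.le_succ _), q, hq, by
        rw [show BF w (k+1) j = min _ _ from rfl, min_eq_left h, hval]⟩
    · obtain ⟨i0, _, hi0⟩ := Finset.exists_mem_eq_inf' (Finset.univ_nonempty)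
        (fun i => BF w k i + w j i)
      obtain ⟨k', hk', q, hq, hval⟩ := ih i0
      refine ⟨k'+1, by omega, fun t => if t ≤ k' then q t else j, by simp, ?_⟩
      have hBF : BF w (k+1) j = BF w k i0 + w j i0 := by
        rw [show BF w (k+1) j = min _ _ from rfl, min_eq_right h.le, hi0]
      rw [hBF, Finset.sum_range_succ]
      have h1 : ∀ t ∈ range k', w ((fun t => if t ≤ k' then q t else j) (t+1))
          ((fun t => if t ≤ k' then q t else j) t) = w (q (t+1)) (q t) := by
        intro t ht
        simp only [mem_range] at ht
        show w (if t+1 ≤ k' then q (t+1) else j) (if t ≤ k' then q t else j) = _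
        rw [if_pos (by omega), if_pos (by omega)]
      rw [Finset.sum_congr rfl h1, ← hval]
      show _ = _ + w (if k'+1 ≤ k' then q (k'+1) else j) (if k' ≤ k' then q k' else j)
      rw [if_pos (le_refl k'), if_neg (by omega : ¬ k'+1 ≤ k'), hq]


lemma cycle_nonneg {N : ℕ} (w : Fin N → Fin N → ℝ) (hdiag : ∀ i, w i i = 0)
    (hw : ∀ σ : Equiv.Perm (Fin N), 0 ≤ ∑ i, w i (σ i))
    (q : ℕ → Fin N) (t1 t2 : ℕ) (h12 : t1 < t2) (hq : q t1 = q t2)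
    (hinj : ∀ s < t2, ∀ s' < t2, q s = q s' → s = s') :
    0 ≤ ∑ t ∈ Finset.Ico t1 t2, w (q (t+1)) (q t) := by
  classical
  obtain ⟨m, hm⟩ : ∃ m, t2 - t1 = m + 1 := ⟨t2 - t1 - 1, by omega⟩
  set g : Fin (m+1) → Fin N := fun i => q (t1 + i) with hg
  have hginj : Function.Injective g := by
    intro a b hab
    have := hinj (t1+a) (by have := a.isLt; omega) (t1+b) (by have := b.isLt; omega) hab
    exact Fin.ext (by omega)
  set f := Equiv.ofInjective g hginj with hf
  set rot := finRotate (m+1) with hrot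
  set σ := rot⁻¹.extendDomain f with hσ
  have key : ∀ a : Fin (m+1), σ (g a) = g (rot⁻¹ a) := by
    intro a
    have h := Equiv.Perm.extendDomain_apply_image rot⁻¹ f a
    simp only [hf, Equiv.ofInjective_apply] at h
    exact h
  have hrotg : ∀ i : Fin (m+1), q (t1 + i + 1) = g (rot i) := by
    intro i
    rcases Nat.lt_or_ge (i : ℕ) m with h | h
    · have : (rot i : ℕ) = (i : ℕ) + 1 := by
        rw [hrot, finRotate_succ_apply,
          Fin.val_add_one_of_lt (by rwa [Fin.lt_iff_val_lt_val, Fin.val_last])]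
      show q (t1 + i + 1) = q (t1 + (rot i : ℕ))
      rw [this]; ring_nf
    · have him : (i : ℕ) = m := by have := i.isLt; omega
      have hrot0 : (rot i : ℕ) = 0 := by
        rw [hrot, finRotate_succ_apply]
        have : i = Fin.last m := Fin.ext him
        simp [this]
      show q (t1 + i + 1) = q (t1 + (rot i : ℕ))
      rw [hrot0, him]
      have : t1 + m + 1 = t2 := by omega
      rw [this]
      simpa using hq.symm
  -- the full sum over Fin N equals the cycle sum
  have hsum : ∑ x : Fin N, w x (σ x) = ∑ i : Fin (m+1), w (g (rot i)) (g i) := by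
    have h1 : ∑ x : Fin N, w x (σ x) = ∑ x ∈ Finset.univ.image g, w x (σ x) := by
      refine (Finset.sum_subset (Finset.subset_univ _) ?_).symm
      intro x _ hx
      have hxr : ¬ (x ∈ Set.range g) := by
        intro ⟨a, ha⟩; exact hx (Finset.mem_image.2 ⟨a, Finset.mem_univ a, ha⟩)
      rw [hσ, Equiv.Perm.extendDomain_apply_not_subtype _ f hxr, hdiag]
    rw [h1, Finset.sum_image (fun a _ b _ h => hginj h)]
    calc ∑ a : Fin (m+1), w (g a) (σ (g a)) = ∑ a : Fin (m+1), w (g a) (g (rot⁻¹ a)) := by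
          exact Finset.sum_congr rfl fun a _ => by rw [key]
    _ = ∑ i : Fin (m+1), w (g (rot i)) (g i) := by
          refine (Fintype.sum_equiv rot _ _ fun i => ?_).symm
          rw [show rot⁻¹ (rot i) = i from rot.symm_apply_apply i]
  have hcyc : ∑ t ∈ Finset.Ico t1 t2, w (q (t+1)) (q t)
      = ∑ i : Fin (m+1), w (g (rot i)) (g i) := by
    rw [Finset.sum_Ico_eq_sum_range]
    have : t2 - t1 = m + 1 := hm
    rw [this, ← Fin.sum_univ_eq_sum_range (fun t => w (q (t1 + t + 1)) (q (t1 + t))) (m+1)]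
    exact Finset.sum_congr rfl fun i _ => by rw [hrotg]
  rw [hcyc, ← hsum]
  exact hw σ

lemma BF_key [NeZero N] (w : Fin N → Fin N → ℝ) (hdiag : ∀ i, w i i = 0)
    (hw : ∀ σ : Equiv.Perm (Fin N), 0 ≤ ∑ i, w i (σ i)) :
    ∀ (k : ℕ) (q : ℕ → Fin N), BF w (N-1) (q k) ≤ ∑ t ∈ range k, w (q (t+1)) (q t) := by
  intro k
  induction k using Nat.strong_induction_on with
  | _ k IH =>
    intro q
    by_cases hk : k ≤ N - 1
    · exact le_trans (BF_anti w (q k) hk) (BF_le_walk w k q)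
    · have hN : 0 < N := Fin.pos_iff_nonempty.2 inferInstance
      have hkN : N ≤ k := by omega
      -- pigeonhole: among q 0, ..., q N there is a repetition
      have hpig : ∃ t2', (∃ t1 < t2', q t1 = q t2') ∧ t2' ≤ N := by
        obtain ⟨x, y, hxy, hqxy⟩ := Fintype.exists_ne_map_eq_of_card_lt
          (fun i : Fin (N+1) => q i) (by simp)
        rcases Nat.lt_or_ge (x : ℕ) (y : ℕ) with h | h
        · exact ⟨y, ⟨x, h, hqxy⟩, by have := y.isLt; omega⟩
        · have : (y : ℕ) < (x : ℕ) := by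
            rcases Nat.lt_or_ge (y:ℕ) (x:ℕ) with h' | h'
            · exact h'
            · exact absurd (Fin.ext (by omega)) hxy
          exact ⟨x, ⟨y, this, hqxy.symm⟩, by have := x.isLt; omega⟩
      classical
      have hex : ∃ t2', ∃ t1 < t2', q t1 = q t2' := ⟨hpig.choose, hpig.choose_spec.1⟩
      obtain ⟨t2, hspec, hmin⟩ : ∃ t2, (∃ t1 < t2, q t1 = q t2) ∧
          ∀ m < t2, ¬∃ s < m, q s = q m :=
        ⟨Nat.find hex, Nat.find_spec hex, fun m hm => Nat.find_min hex hm⟩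
      obtain ⟨t1, h12, hq12⟩ := hspec
      have ht2N : t2 ≤ N := by
        by_contra hcon
        exact hmin _ (by have := hpig.choose_spec.2; omega) hpig.choose_spec.1
      have hinj : ∀ s < t2, ∀ s' < t2, q s = q s' → s = s' := by
        intro s hs s' hs' hss
        by_contra hne
        rcases Nat.lt_or_ge s s' with h | h
        · exact absurd ⟨s, h, hss⟩ (hmin _ hs')
        · have : s' < s := by omega
          exact absurd ⟨s', this, hss.symm⟩ (hmin _ hs)
      set d := t2 - t1 with hd
      have hd1 : 1 ≤ d := by omega
      set q' : ℕ → Fin N := fun t => if t ≤ t1 then q t else q (t + d) with hq'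
      set k' := k - d with hk'
      have hk'k : k' < k := by omega
      have ht1k' : t1 ≤ k' := by omega
      have hq'end : q' k' = q k := by
        rcases Nat.lt_or_ge t1 k' with h | h
        · show (if k' ≤ t1 then q k' else q (k' + d)) = q k
          rw [if_neg (by omega), show k' + d = k by omega]
        · have hk1 : k' = t1 := by omega
          show (if k' ≤ t1 then q k' else q (k' + d)) = q k
          rw [if_pos (by omega), hk1, hq12, show t2 = k by omega]
      -- weight of spliced walk
      have hshift : ∀ t, t1 ≤ t → w (q' (t+1)) (q' t) = w (q (t+d+1)) (q (t+d)) := by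
        intro t ht
        show w (if t+1 ≤ t1 then q (t+1) else q (t+1+d)) (if t ≤ t1 then q t else q (t+d)) = _
        rcases Nat.lt_or_ge t1 t with h | h
        · rw [if_neg (by omega), if_neg (by omega), show t+1+d = t+d+1 by omega]
        · have ht1 : t = t1 := by omega
          rw [if_neg (by omega), if_pos (by omega), ht1, hq12,
            show t1+1+d = t1+d+1 by omega, show t2 = t1 + d by omega]
      have hlow : ∀ t, t < t1 → w (q' (t+1)) (q' t) = w (q (t+1)) (q t) := by
        intro t ht
        show w (if t+1 ≤ t1 then q (t+1) else q (t+1+d)) (if t ≤ t1 then q t else q (t+d)) = _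
        rw [if_pos (by omega), if_pos (by omega)]
      have hsplit : ∑ t ∈ range k', w (q' (t+1)) (q' t)
          = ∑ t ∈ range k, w (q (t+1)) (q t) - ∑ t ∈ Finset.Ico t1 t2, w (q (t+1)) (q t) := by
        have e1 : ∑ t ∈ range k', w (q' (t+1)) (q' t)
            = ∑ t ∈ range t1, w (q' (t+1)) (q' t) + ∑ t ∈ Finset.Ico t1 k', w (q' (t+1)) (q' t) := by
          rw [Finset.range_eq_Ico, Finset.range_eq_Ico, Finset.sum_Ico_consecutive _ (Nat.zero_le t1) ht1k',
            ← Finset.range_eq_Ico]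
        have e2 : ∑ t ∈ range t1, w (q' (t+1)) (q' t) = ∑ t ∈ range t1, w (q (t+1)) (q t) :=
          Finset.sum_congr rfl fun t ht => hlow t (Finset.mem_range.1 ht)
        have e3 : ∑ t ∈ Finset.Ico t1 k', w (q' (t+1)) (q' t)
            = ∑ t ∈ Finset.Ico t2 k, w (q (t+1)) (q t) := by
          rw [Finset.sum_Ico_eq_sum_range, Finset.sum_Ico_eq_sum_range]
          have hlen : k' - t1 = k - t2 := by omega
          rw [hlen]
          refine Finset.sum_congr rfl fun t ht => ?_
          rw [hshift (t1 + t) (by omega)]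
          congr 1 <;> congr 1 <;> omega
        have e4 : ∑ t ∈ range k, w (q (t+1)) (q t)
            = ∑ t ∈ range t1, w (q (t+1)) (q t) + ∑ t ∈ Finset.Ico t1 t2, w (q (t+1)) (q t)
              + ∑ t ∈ Finset.Ico t2 k, w (q (t+1)) (q t) := by
          have h1 := Finset.sum_Ico_consecutive (fun t => w (q (t+1)) (q t))
            (Nat.zero_le t1) (by omega : t1 ≤ t2)
          have h2 := Finset.sum_Ico_consecutive (fun t => w (q (t+1)) (q t))
            (Nat.zero_le t2) (by omega : t2 ≤ k)
          rw [Finset.range_eq_Ico, ← h2, ← h1, Finset.range_eq_Ico]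
        rw [e1, e2, e3, e4]; ring
      have hcyc := cycle_nonneg w hdiag hw q t1 t2 h12 hq12 hinj
      calc BF w (N-1) (q k) = BF w (N-1) (q' k') := by rw [hq'end]
      _ ≤ ∑ t ∈ range k', w (q' (t+1)) (q' t) := IH k' hk'k q'
      _ ≤ ∑ t ∈ range k, w (q (t+1)) (q t) := by rw [hsplit]; linarith


lemma exists_potential {N : ℕ} [NeZero N] (w : Fin N → Fin N → ℝ)
    (hdiag : ∀ i, w i i = 0)
    (hw : ∀ σ : Equiv.Perm (Fin N), 0 ≤ ∑ i, w i (σ i)) :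
    ∃ u : Fin N → ℝ, ∀ i j, u i - u j ≤ w i j := by
  refine ⟨BF w (N-1), fun i j => ?_⟩
  obtain ⟨k', hk', q, hqk, hval⟩ := BF_exists_walk w (N-1) j
  set q'' : ℕ → Fin N := fun t => if t ≤ k' then q t else i with hq''
  have hend : q'' (k'+1) = i := by
    show (if k'+1 ≤ k' then q (k'+1) else i) = i
    rw [if_neg (by omega)]
  have hwt : ∑ t ∈ range (k'+1), w (q'' (t+1)) (q'' t)
      = BF w (N-1) j + w i j := by
    rw [Finset.sum_range_succ]
    have h1 : ∀ t ∈ range k', w (q'' (t+1)) (q'' t) = w (q (t+1)) (q t) := by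
      intro t ht
      simp only [mem_range] at ht
      show w (if t+1 ≤ k' then q (t+1) else i) (if t ≤ k' then q t else i) = _
      rw [if_pos (by omega), if_pos (by omega)]
    rw [Finset.sum_congr rfl h1, ← hval, hend]
    show _ + w i (if k' ≤ k' then q k' else i) = _
    rw [if_pos (le_refl _), hqk]
  have := BF_key w hdiag hw (k'+1) q''
  rw [hend, hwt] at this
  linarith

lemma mdot_sum_left {m k ι : Type*} [Fintype m] [Fintype k] (s : Finset ι)
    (f : ι → Matrix m k ℝ) (Y : Matrix m k ℝ) :
    mdot (∑ i ∈ s, f i) Y = ∑ i ∈ s, mdot (f i) Y := by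
  simp only [mdot, Matrix.sum_apply, Finset.sum_mul]
  rw [show (∑ a : m, ∑ b : k, ∑ i ∈ s, f i a b * Y a b)
      = ∑ a : m, ∑ i ∈ s, ∑ b : k, f i a b * Y a b from
    Finset.sum_congr rfl fun a _ => Finset.sum_comm]
  exact Finset.sum_comm

lemma mdot_sum_right {m k ι : Type*} [Fintype m] [Fintype k] (s : Finset ι)
    (f : ι → Matrix m k ℝ) (X : Matrix m k ℝ) :
    mdot X (∑ i ∈ s, f i) = ∑ i ∈ s, mdot X (f i) := by
  simp only [mdot, Matrix.sum_apply, Finset.mul_sum]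
  rw [show (∑ a : m, ∑ b : k, ∑ i ∈ s, X a b * f i a b)
      = ∑ a : m, ∑ i ∈ s, ∑ b : k, X a b * f i a b from
    Finset.sum_congr rfl fun a _ => Finset.sum_comm]
  exact Finset.sum_comm

lemma mdot_smul_left {m k : Type*} [Fintype m] [Fintype k] (c : ℝ)
    (X Y : Matrix m k ℝ) : mdot (c • X) Y = c * mdot X Y := by
  simp only [mdot, Matrix.smul_apply, smul_eq_mul, Finset.mul_sum]
  exact Finset.sum_congr rfl fun a _ => Finset.sum_congr rfl fun b _ => by ring

lemma mdot_smul_right {m k : Type*} [Fintype m] [Fintype k] (c : ℝ)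
    (X Y : Matrix m k ℝ) : mdot X (c • Y) = c * mdot X Y := by
  simp only [mdot, Matrix.smul_apply, smul_eq_mul, Finset.mul_sum]
  exact Finset.sum_congr rfl fun a _ => Finset.sum_congr rfl fun b _ => by ring


lemma sum_ite_val {K : ℕ} (v : ℕ) (f : Fin K → ℝ) :
    ∑ a : Fin K, (if (a : ℕ) = v then f a else 0) = if h : v < K then f ⟨v, h⟩ else 0 := by
  split
  · next h =>
    rw [Finset.sum_eq_single (⟨v, h⟩ : Fin K)]
    · rw [if_pos rfl]
    · intro b _ hb
      exact if_neg (fun hc => hb (Fin.ext hc))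
    · intro hb; exact absurd (mem_univ _) hb
  · next h =>
    apply Finset.sum_eq_zero
    intro a _
    exact if_neg (fun hc => h (by rw [← hc]; exact a.isLt))

lemma truncX_apply (N : ℕ) (σ : Equiv.Perm (Fin (N+2))) (a b : Fin (N + 2 - 1)) :
    (truncate (N+2) (permMatR (N+2) σ) - 1) a b
      = (if σ (Fin.castLE (Nat.sub_le (N+2) 1) a) = Fin.castLE (Nat.sub_le (N+2) 1) b
          then (1:ℝ) else 0) - (if a = b then 1 else 0) := by
  simp [truncate, permMatR, Matrix.sub_apply, Matrix.one_apply]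

lemma rowsum_tr (N : ℕ) (σ : Equiv.Perm (Fin (N+2))) (i : Fin (N+2)) (hi : (i:ℕ) < N+1) :
    -(∑ b, (truncate (N+2) (permMatR (N+2) σ) - 1) ⟨(i:ℕ), hi⟩ b)
      = if ((σ i : ℕ)) = N+1 then 1 else 0 := by
  set cL : Fin (N + 2 - 1) → Fin (N+2) := Fin.castLE (Nat.sub_le (N+2) 1) with hcL
  have hcLi : cL ⟨(i:ℕ), hi⟩ = i := Fin.ext rfl
  rw [Finset.sum_congr rfl fun b _ => truncX_apply N σ _ b]
  rw [← hcL, Finset.sum_sub_distrib]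
  have h2 : ∑ b : Fin (N + 2 - 1), (if (⟨(i:ℕ), hi⟩ : Fin (N + 2 - 1)) = b
      then (1:ℝ) else 0) = 1 := by
    rw [Finset.sum_ite_eq _ _ (fun _ => (1:ℝ)), if_pos (mem_univ _)]
  have h1 : ∑ b : Fin (N + 2 - 1), (if σ (cL ⟨(i:ℕ), hi⟩) = cL b
      then (1:ℝ) else 0)
      = if _ : ((σ i : ℕ)) < N + 2 - 1 then 1 else 0 := by
    rw [← sum_ite_val ((σ i : ℕ)) (fun _ => (1:ℝ))]
    refine Finset.sum_congr rfl fun b _ => ?_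
    refine if_congr ?_ rfl rfl
    rw [hcLi]
    constructor
    · intro h; exact (congrArg Fin.val h).symm
    · intro h; exact Fin.ext h.symm
  rw [h1, h2]
  have hσv := (σ i).isLt
  by_cases hs : ((σ i : ℕ)) < N + 1
  · rw [dif_pos (by omega : ((σ i : ℕ)) < N + 2 - 1), if_neg (by omega)]
    ring
  · rw [dif_neg (by omega : ¬ ((σ i : ℕ)) < N + 2 - 1), if_pos (by omega)]
    ring

lemma colsum_tr (N : ℕ) (σ : Equiv.Perm (Fin (N+2))) (j : Fin (N+2)) (hj : (j:ℕ) < N+1) :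
    -(∑ a, (truncate (N+2) (permMatR (N+2) σ) - 1) a ⟨(j:ℕ), hj⟩)
      = if ((σ.symm j : ℕ)) = N+1 then 1 else 0 := by
  set cL : Fin (N + 2 - 1) → Fin (N+2) := Fin.castLE (Nat.sub_le (N+2) 1) with hcL
  have hcLj : cL ⟨(j:ℕ), hj⟩ = j := Fin.ext rfl
  rw [Finset.sum_congr rfl fun a _ => truncX_apply N σ a _]
  rw [← hcL, Finset.sum_sub_distrib]
  have h2 : ∑ a : Fin (N + 2 - 1), (if a = (⟨(j:ℕ), hj⟩ : Fin (N + 2 - 1))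
      then (1:ℝ) else 0) = 1 := by
    rw [Finset.sum_ite_eq' _ _ (fun _ => (1:ℝ)), if_pos (mem_univ _)]
  have h1 : ∑ a : Fin (N + 2 - 1), (if σ (cL a) = cL ⟨(j:ℕ), hj⟩
      then (1:ℝ) else 0)
      = if _ : ((σ.symm j : ℕ)) < N + 2 - 1 then 1 else 0 := by
    rw [← sum_ite_val ((σ.symm j : ℕ)) (fun _ => (1:ℝ))]
    refine Finset.sum_congr rfl fun a _ => ?_
    refine if_congr ?_ rfl rfl
    rw [hcLj]
    constructor
    · intro h
      have h' : cL a = σ.symm j := by rw [← h, Equiv.symm_apply_apply]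
      exact congrArg Fin.val h'
    · intro h
      have h' : cL a = σ.symm j := Fin.ext h
      rw [h', Equiv.apply_symm_apply]
  rw [h1, h2]
  have hσv := (σ.symm j).isLt
  by_cases hs : ((σ.symm j : ℕ)) < N + 1
  · rw [dif_pos (by omega : ((σ.symm j : ℕ)) < N + 2 - 1), if_neg (by omega)]
    ring
  · rw [dif_neg (by omega : ¬ ((σ.symm j : ℕ)) < N + 2 - 1), if_pos (by omega)]
    ring

lemma K1 (N : ℕ) (σ : Equiv.Perm (Fin (N+2))) (i j : Fin (N+2)) (hij : i ≠ j) :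
    mdot (truncate (N+2) (permMatR (N+2) σ) - 1) (Mbar (N+2) i j)
      = if σ i = j then 1 else 0 := by
  have hiv := i.isLt
  have hjv := j.isLt
  by_cases hj : (j : ℕ) = N + 1
  · have hi : (i : ℕ) < N + 1 := by
      rcases Nat.lt_or_ge (i:ℕ) (N+1) with h | h
      · exact h
      · exact absurd (Fin.ext (by omega)) hij
    have hM : ∀ a b : Fin (N + 2 - 1), Mbar (N+2) i j a b
        = if (a : ℕ) = (i : ℕ) then -1 else 0 := by
      intro a b
      have hb := b.isLt
      simp only [Mbar, Matrix.of_apply]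
      split_ifs <;> first | rfl | (exfalso; omega)
    unfold mdot
    calc ∑ a, ∑ b, (truncate (N+2) (permMatR (N+2) σ) - 1) a b * Mbar (N+2) i j a b
        = ∑ a : Fin (N + 2 - 1), (if (a : ℕ) = (i : ℕ) then
            -(∑ b, (truncate (N+2) (permMatR (N+2) σ) - 1) a b) else 0) := by
          refine Finset.sum_congr rfl fun a _ => ?_
          rw [Finset.sum_congr rfl fun b _ => by rw [hM a b]]
          split_ifs with h
          · simp [Finset.sum_neg_distrib]
          · simp
    _ = -(∑ b, (truncate (N+2) (permMatR (N+2) σ) - 1) ⟨(i:ℕ), by omega⟩ b) := by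
          rw [sum_ite_val ((i:ℕ)) _, dif_pos (by omega : (i:ℕ) < N + 2 - 1)]
    _ = if ((σ i : ℕ)) = N+1 then 1 else 0 := rowsum_tr N σ i hi
    _ = if σ i = j then 1 else 0 := by
          refine if_congr ?_ rfl rfl
          constructor
          · intro h; exact Fin.ext (by omega)
          · intro h; rw [h]; omega
  · by_cases hi : (i : ℕ) = N + 1
    · have hj' : (j : ℕ) < N + 1 := by omega
      have hM : ∀ a b : Fin (N + 2 - 1), Mbar (N+2) i j a b
          = if (b : ℕ) = (j : ℕ) then -1 else 0 := by
        intro a b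
        have ha := a.isLt
        have hb := b.isLt
        simp only [Mbar, Matrix.of_apply]
        split_ifs <;> first | rfl | (exfalso; omega)
      unfold mdot
      rw [Finset.sum_comm]
      calc ∑ b, ∑ a, (truncate (N+2) (permMatR (N+2) σ) - 1) a b * Mbar (N+2) i j a b
          = ∑ b : Fin (N + 2 - 1), (if (b : ℕ) = (j : ℕ) then
              -(∑ a, (truncate (N+2) (permMatR (N+2) σ) - 1) a b) else 0) := by
            refine Finset.sum_congr rfl fun b _ => ?_
            rw [Finset.sum_congr rfl fun a _ => by rw [hM a b]]
            split_ifs with h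
            · simp [Finset.sum_neg_distrib]
            · simp
      _ = -(∑ a, (truncate (N+2) (permMatR (N+2) σ) - 1) a ⟨(j:ℕ), by omega⟩) := by
            rw [sum_ite_val ((j:ℕ)) _, dif_pos (by omega : (j:ℕ) < N + 2 - 1)]
      _ = if ((σ.symm j : ℕ)) = N+1 then 1 else 0 := colsum_tr N σ j hj'
      _ = if σ i = j then 1 else 0 := by
            refine if_congr ?_ rfl rfl
            constructor
            · intro h
              have h' : σ.symm j = i := Fin.ext (by omega)
              rw [← h', Equiv.apply_symm_apply]
            · intro h
              have h' : σ.symm j = i := by rw [← h, Equiv.symm_apply_apply]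
              rw [h']; omega
    · have hM : ∀ a b : Fin (N + 2 - 1), Mbar (N+2) i j a b
          = if (a : ℕ) = (i : ℕ) then (if (b : ℕ) = (j : ℕ) then 1 else 0) else 0 := by
        intro a b
        have ha := a.isLt
        have hb := b.isLt
        simp only [Mbar, Matrix.of_apply]
        split_ifs <;> first | rfl | (exfalso; omega)
      unfold mdot
      calc ∑ a, ∑ b, (truncate (N+2) (permMatR (N+2) σ) - 1) a b * Mbar (N+2) i j a b
          = ∑ a : Fin (N + 2 - 1), (if (a : ℕ) = (i : ℕ) then
              (∑ b : Fin (N + 2 - 1), (if (b : ℕ) = (j : ℕ) then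
                (truncate (N+2) (permMatR (N+2) σ) - 1) a b else 0)) else 0) := by
            refine Finset.sum_congr rfl fun a _ => ?_
            rw [Finset.sum_congr rfl fun b _ => by rw [hM a b]]
            split_ifs with h
            · refine Finset.sum_congr rfl fun b _ => ?_
              split_ifs <;> ring
            · simp
      _ = (truncate (N+2) (permMatR (N+2) σ) - 1) ⟨(i:ℕ), by omega⟩ ⟨(j:ℕ), by omega⟩ := by
            rw [sum_ite_val (K := N + 2 - 1) ((i:ℕ)), dif_pos (by omega : (i:ℕ) < N + 2 - 1),
              sum_ite_val (K := N + 2 - 1) ((j:ℕ)), dif_pos (by omega : (j:ℕ) < N + 2 - 1)]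
      _ = if σ i = j then 1 else 0 := by
            rw [truncX_apply]
            have hcLi : Fin.castLE (Nat.sub_le (N+2) 1) (⟨(i:ℕ), by omega⟩ : Fin (N + 2 - 1)) = i :=
              Fin.ext rfl
            have hcLj : Fin.castLE (Nat.sub_le (N+2) 1) (⟨(j:ℕ), by omega⟩ : Fin (N + 2 - 1)) = j :=
              Fin.ext rfl
            rw [hcLi, hcLj,
              if_neg (show ¬(⟨(i:ℕ), by omega⟩ : Fin (N + 2 - 1)) = ⟨(j:ℕ), by omega⟩ from
                fun h => hij (Fin.ext (by have := congrArg Fin.val h; exact this)))]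
            ring

/-- zero-padded coefficient array of `Y` indexed by `Fin (N+2)`. -/
def cc (N : ℕ) (Y : Matrix (Fin (N + 2 - 1)) (Fin (N + 2 - 1)) ℝ) (i j : Fin (N+2)) : ℝ :=
  if h : (i:ℕ) < N+1 ∧ (j:ℕ) < N+1 then Y ⟨(i:ℕ), h.1⟩ ⟨(j:ℕ), h.2⟩ else 0

lemma fin_sum_split (N : ℕ) (f : Fin (N+2) → ℝ) :
    ∑ i : Fin (N+2), f i
      = (∑ a : Fin (N+2-1), f (Fin.castLE (Nat.sub_le (N+2) 1) a)) + f ⟨N+1, by omega⟩ :=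
  Fin.sum_univ_castSucc f

lemma K2 (N : ℕ) (σ : Equiv.Perm (Fin (N+2))) (Y : Matrix (Fin (N + 2 - 1)) (Fin (N + 2 - 1)) ℝ) :
    mdot (truncate (N+2) (permMatR (N+2) σ) - 1) Y
      = ∑ i : Fin (N+2), cc N Y i (σ i) - ∑ i : Fin (N+2), cc N Y i i := by
  set cL : Fin (N + 2 - 1) → Fin (N+2) := Fin.castLE (Nat.sub_le (N+2) 1) with hcL
  unfold mdot
  rw [Finset.sum_congr rfl fun a _ => Finset.sum_congr rfl fun b _ => by
        rw [truncX_apply N σ a b, sub_mul]]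
  rw [← hcL]
  rw [Finset.sum_congr rfl fun a _ => Finset.sum_sub_distrib _ _, Finset.sum_sub_distrib]
  have hT2 : ∑ a : Fin (N+2-1), ∑ b : Fin (N+2-1), (if a = b then (1:ℝ) else 0) * Y a b
      = ∑ i : Fin (N+2), cc N Y i i := by
    rw [fin_sum_split N (fun i => cc N Y i i), ← hcL]
    have hlast : cc N Y ⟨N+1, by omega⟩ ⟨N+1, by omega⟩ = 0 :=
      dif_neg (fun hcon => absurd hcon.1 (lt_irrefl _))
    rw [hlast, add_zero]
    refine Finset.sum_congr rfl fun a _ => ?_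
    have h1 : ∑ b : Fin (N+2-1), (if a = b then (1:ℝ) else 0) * Y a b = Y a a := by
      rw [Finset.sum_congr rfl fun b _ => by rw [ite_mul, one_mul, zero_mul],
        Finset.sum_ite_eq _ _ (fun b => Y a b), if_pos (mem_univ _)]
    rw [h1]
    have ha := a.isLt
    have hval : ((cL a : ℕ)) = (a:ℕ) := rfl
    rw [show cc N Y (cL a) (cL a) = Y ⟨((cL a : ℕ)), by omega⟩ ⟨((cL a : ℕ)), by omega⟩ from
      dif_pos ⟨by omega, by omega⟩]
    congr 1 <;> exact Fin.ext rfl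
  have hT1 : ∑ a : Fin (N+2-1), ∑ b : Fin (N+2-1),
        (if σ (cL a) = cL b then (1:ℝ) else 0) * Y a b
      = ∑ i : Fin (N+2), cc N Y i (σ i) := by
    rw [fin_sum_split N (fun i => cc N Y i (σ i)), ← hcL]
    have hlast : cc N Y ⟨N+1, by omega⟩ (σ ⟨N+1, by omega⟩) = 0 :=
      dif_neg (fun hcon => absurd hcon.1 (lt_irrefl _))
    rw [hlast, add_zero]
    refine Finset.sum_congr rfl fun a _ => ?_
    have ha := a.isLt
    have hval : ((cL a : ℕ)) = (a:ℕ) := rfl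
    have h1 : ∑ b : Fin (N+2-1), (if σ (cL a) = cL b then (1:ℝ) else 0) * Y a b
        = if h : ((σ (cL a) : ℕ)) < N+2-1 then Y a ⟨((σ (cL a) : ℕ)), h⟩ else 0 := by
      rw [← sum_ite_val ((σ (cL a) : ℕ)) (fun b => Y a b)]
      refine Finset.sum_congr rfl fun b _ => ?_
      rw [ite_mul, one_mul, zero_mul]
      refine if_congr ?_ rfl rfl
      constructor
      · intro h; exact (congrArg Fin.val h).symm
      · intro h; exact Fin.ext h.symm
    rw [h1]
    by_cases hs : ((σ (cL a) : ℕ)) < N+1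
    · rw [dif_pos (by omega : ((σ (cL a) : ℕ)) < N+2-1),
        show cc N Y (cL a) (σ (cL a)) = Y ⟨((cL a : ℕ)), by omega⟩ ⟨((σ (cL a) : ℕ)), by omega⟩ from
          dif_pos ⟨by omega, by omega⟩]
      congr 1 <;> first | rfl | exact Fin.ext rfl
    · rw [dif_neg (by omega : ¬ ((σ (cL a) : ℕ)) < N+2-1),
        show cc N Y (cL a) (σ (cL a)) = 0 from dif_neg (fun hcon => hs hcon.2)]
  rw [hT1, hT2]

lemma sum_pair (N : ℕ) (v w' : ℕ) (hv : v < N+2) (hw : w' < N+2)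
    (f : Fin (N+2) × Fin (N+2) → ℝ) :
    ∑ p : Fin (N+2) × Fin (N+2), (if ((p.1:ℕ) = v ∧ (p.2:ℕ) = w') then f p else 0)
      = f (⟨v,hv⟩, ⟨w',hw⟩) := by
  rw [Fintype.sum_prod_type]
  have step : ∀ i : Fin (N+2),
      ∑ jj : Fin (N+2), (if ((i:ℕ) = v ∧ (jj:ℕ) = w') then f (i, jj) else 0)
      = if (i:ℕ) = v then f (i, ⟨w',hw⟩) else 0 := by
    intro i
    by_cases hiv : (i:ℕ) = v
    · rw [if_pos hiv]
      rw [Finset.sum_congr rfl fun jj _ => if_congr (and_iff_right hiv) rfl rfl]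
      rw [sum_ite_val (K := N+2) w' (fun jj => f (i, jj)), dif_pos hw]
    · rw [if_neg hiv]
      exact Finset.sum_eq_zero fun jj _ => if_neg (fun hc => hiv hc.1)
  rw [Finset.sum_congr rfl fun i _ => step i]
  rw [sum_ite_val (K := N+2) v (fun i => f (i, ⟨w',hw⟩)), dif_pos hv]

lemma Mbar_split (N : ℕ) (i j : Fin (N+2)) (a b : Fin (N+2-1)) :
    Mbar (N+2) i j a b
      = (if ((i:ℕ) = (a:ℕ) ∧ (j:ℕ) = (b:ℕ)) then 1 else 0)
        - (if ((i:ℕ) = (a:ℕ) ∧ (j:ℕ) = N+1) then 1 else 0)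
        - (if ((i:ℕ) = N+1 ∧ (j:ℕ) = (b:ℕ)) then 1 else 0) := by
  have ha := a.isLt
  have hb := b.isLt
  simp only [Mbar, Matrix.of_apply]
  split_ifs <;> first | (exfalso; omega) | norm_num

set_option maxHeartbeats 2000000 in
theorem stmt2aux (N : ℕ) :
    (coneOf fun e : {e : Fin (N+2) × Fin (N+2) // e.1 ≠ e.2} => Mbar (N+2) e.1.1 e.1.2) =
      {Y | ∀ X ∈ coneOf fun σ : Equiv.Perm (Fin (N+2)) =>
          truncate (N+2) (permMatR (N+2) σ) - 1,
        0 ≤ mdot X Y} := by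
  classical
  apply Set.eq_of_subset_of_subset
  · rintro Y ⟨lam, hlam, rfl⟩ X ⟨mu, hmu, rfl⟩
    rw [mdot_sum_left]
    refine Finset.sum_nonneg fun σ _ => ?_
    rw [mdot_smul_left]
    refine mul_nonneg (hmu σ) ?_
    rw [mdot_sum_right]
    refine Finset.sum_nonneg fun e _ => ?_
    rw [mdot_smul_right]
    refine mul_nonneg (hlam e) ?_
    rw [K1 N σ e.1.1 e.1.2 e.2]
    split <;> norm_num
  · intro Y hY
    have hgen : ∀ σ : Equiv.Perm (Fin (N+2)),
        0 ≤ mdot (truncate (N+2) (permMatR (N+2) σ) - 1) Y := by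
      intro σ
      refine hY _ ⟨fun τ => if τ = σ then 1 else 0,
        fun τ => by show (0:ℝ) ≤ if τ = σ then 1 else 0; split <;> norm_num, ?_⟩
      rw [Finset.sum_congr rfl fun τ _ => by rw [ite_smul, one_smul, zero_smul]]
      rw [Finset.sum_ite_eq' univ σ (fun τ => truncate (N+2) (permMatR (N+2) τ) - 1),
        if_pos (mem_univ σ)]
    set c : Fin (N+2) → Fin (N+2) → ℝ := cc N Y with hc
    set w : Fin (N+2) → Fin (N+2) → ℝ := fun i j => c i j - c j j with hwdef
    have hdiag : ∀ i, w i i = 0 := fun i => sub_self _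
    have hw : ∀ σ : Equiv.Perm (Fin (N+2)), 0 ≤ ∑ i, w i (σ i) := by
      intro σ
      have h0 := hgen σ
      rw [K2 N σ Y] at h0
      have hre : ∑ i, c (σ i) (σ i) = ∑ i, c i i :=
        Fintype.sum_equiv σ _ _ (fun i => rfl)
      calc (0:ℝ) ≤ ∑ i, c i (σ i) - ∑ i, c i i := h0
      _ = ∑ i, (c i (σ i) - c (σ i) (σ i)) := by rw [Finset.sum_sub_distrib, hre]
      _ = ∑ i, w i (σ i) := rfl
    obtain ⟨u, hu⟩ := exists_potential w hdiag hw
    refine ⟨fun e => w e.1.1 e.1.2 - u e.1.1 + u e.1.2,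
      fun e => by
        have := hu e.1.1 e.1.2
        show (0:ℝ) ≤ w e.1.1 e.1.2 - u e.1.1 + u e.1.2
        linarith, ?_⟩
    set lam' : Fin (N+2) × Fin (N+2) → ℝ :=
      fun p => if p.1 = p.2 then 0 else (w p.1 p.2 - u p.1 + u p.2) with hlam'
    have hlam'_diag : ∀ p : Fin (N+2) × Fin (N+2), p.1 = p.2 → lam' p = 0 :=
      fun p h => by simp [hlam', h]
    have hlam'_off : ∀ p : Fin (N+2) × Fin (N+2), p.1 ≠ p.2 →
        lam' p = w p.1 p.2 - u p.1 + u p.2 :=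
      fun p h => by simp [hlam', h]
    have hsub : ∑ e : {e : Fin (N+2) × Fin (N+2) // e.1 ≠ e.2},
        (w e.1.1 e.1.2 - u e.1.1 + u e.1.2) • Mbar (N+2) e.1.1 e.1.2
        = ∑ p : Fin (N+2) × Fin (N+2), lam' p • Mbar (N+2) p.1 p.2 := by
      have h2 : ∑ p : Fin (N+2) × Fin (N+2), lam' p • Mbar (N+2) p.1 p.2
          = ∑ p ∈ univ.filter (fun p : Fin (N+2) × Fin (N+2) => p.1 ≠ p.2),
              lam' p • Mbar (N+2) p.1 p.2 := by
        refine (Finset.sum_filter_of_ne fun p _ hne => ?_).symm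
        intro hdg
        exact hne (by rw [hlam'_diag p hdg, zero_smul])
      have h1 : ∑ p ∈ univ.filter (fun p : Fin (N+2) × Fin (N+2) => p.1 ≠ p.2),
            lam' p • Mbar (N+2) p.1 p.2
          = ∑ e : {e : Fin (N+2) × Fin (N+2) // e.1 ≠ e.2},
              lam' e.val • Mbar (N+2) e.1.1 e.1.2 :=
        Finset.sum_subtype _ (by simp) _
      rw [h2, h1]
      refine Finset.sum_congr rfl fun e _ => ?_
      rw [hlam'_off e.val e.prop]
    rw [hsub]
    -- entrywise identity
    apply Matrix.ext
    intro a b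
    have ha := a.isLt
    have hb := b.isLt
    rw [Matrix.sum_apply]
    rw [Finset.sum_congr rfl fun p _ => by
      rw [Matrix.smul_apply, smul_eq_mul, Mbar_split N p.1 p.2 a b, mul_sub, mul_sub]]
    rw [Finset.sum_sub_distrib, Finset.sum_sub_distrib]
    have S1 : ∑ p : Fin (N+2) × Fin (N+2),
        lam' p * (if ((p.1:ℕ) = (a:ℕ) ∧ (p.2:ℕ) = (b:ℕ)) then 1 else 0)
        = lam' (⟨(a:ℕ), by omega⟩, ⟨(b:ℕ), by omega⟩) := by
      rw [Finset.sum_congr rfl fun p _ => by rw [mul_ite, mul_one, mul_zero]]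
      exact sum_pair N _ _ (by omega) (by omega) lam'
    have S2 : ∑ p : Fin (N+2) × Fin (N+2),
        lam' p * (if ((p.1:ℕ) = (a:ℕ) ∧ (p.2:ℕ) = N+1) then 1 else 0)
        = lam' (⟨(a:ℕ), by omega⟩, ⟨N+1, by omega⟩) := by
      rw [Finset.sum_congr rfl fun p _ => by rw [mul_ite, mul_one, mul_zero]]
      exact sum_pair N _ _ (by omega) (by omega) lam'
    have S3 : ∑ p : Fin (N+2) × Fin (N+2),
        lam' p * (if ((p.1:ℕ) = N+1 ∧ (p.2:ℕ) = (b:ℕ)) then 1 else 0)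
        = lam' (⟨N+1, by omega⟩, ⟨(b:ℕ), by omega⟩) := by
      rw [Finset.sum_congr rfl fun p _ => by rw [mul_ite, mul_one, mul_zero]]
      exact sum_pair N _ _ (by omega) (by omega) lam'
    rw [S1, S2, S3]
    -- now pure algebra with c-values
    set A : Fin (N+2) := ⟨(a:ℕ), by omega⟩ with hA
    set B : Fin (N+2) := ⟨(b:ℕ), by omega⟩ with hB
    set L : Fin (N+2) := ⟨N+1, by omega⟩ with hL
    have hcAB : c A B = Y a b := by
      rw [hc, show cc N Y A B = Y ⟨(A:ℕ), by exact ha⟩ ⟨(B:ℕ), by exact hb⟩ from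
        dif_pos ⟨ha, hb⟩]
    have hcBB : c B B = Y b b := by
      rw [hc, show cc N Y B B = Y ⟨(B:ℕ), by exact hb⟩ ⟨(B:ℕ), by exact hb⟩ from
        dif_pos ⟨hb, hb⟩]
    have hcAL : c A L = 0 := by
      rw [hc]
      exact dif_neg (fun hcon => absurd hcon.2 (lt_irrefl _))
    have hcLL : c L L = 0 := by
      rw [hc]
      exact dif_neg (fun hcon => absurd hcon.1 (lt_irrefl _))
    have hcLB : c L B = 0 := by
      rw [hc]
      exact dif_neg (fun hcon => absurd hcon.1 (lt_irrefl _))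
    have hAL : A ≠ L := fun h => by
      have := congrArg Fin.val h
      simp only [hA, hL] at this
      omega
    have hLB : L ≠ B := fun h => by
      have := congrArg Fin.val h
      simp only [hL, hB] at this
      omega
    have EAL : lam' (A, L) = c A L - c L L - u A + u L := hlam'_off (A, L) hAL
    have ELB : lam' (L, B) = c L B - c B B - u L + u B := hlam'_off (L, B) hLB
    by_cases hab : a = b
    · have hAB : A = B := Fin.ext (by have := congrArg Fin.val hab; exact this)
      have EAB : lam' (A, B) = 0 := hlam'_diag (A, B) hAB
      have h1 : u A = u B := by rw [hAB]
      have h2 : Y a b = Y b b := by rw [hab]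
      rw [EAB, EAL, ELB]
      linarith [hcAL, hcLL, hcLB, hcBB, h1, h2]
    · have hAB : A ≠ B := fun h => hab (Fin.ext (by
        have := congrArg Fin.val h
        simp only [hA, hB] at this
        exact this))
      have EAB : lam' (A, B) = c A B - c B B - u A + u B := hlam'_off (A, B) hAB
      rw [EAB, EAL, ELB]
      linarith [hcAL, hcLL, hcLB, hcBB, hcAB]


theorem stmt2 (n : ℕ) (hn : 2 ≤ n) :
    (coneOf fun e : {e : Fin n × Fin n // e.1 ≠ e.2} => Mbar n e.1.1 e.1.2) =
      {Y | ∀ X ∈ coneOf fun σ : Equiv.Perm (Fin n) => truncate n (permMatR n σ) - 1,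
        0 ≤ mdot X Y} := by
  obtain ⟨N, rfl⟩ : ∃ N, n = N + 2 := ⟨n - 2, by omega⟩
  exact stmt2aux N
end

section
/- Let n ≥ 2. The n(n−1) × (n−1)² integer matrix whose rows, indexed by the ordered pairs (i,j) with i ≠ j in [n], are the matrices M̄_{i,j} written out as vectors of length (n−1)², is totally unimodular: every square submatrix of it has determinant equal to 0, 1 or −1. -/
/-!
The rows `M̄_{i,j}` with `i, j < n` are unit vectors, and adjoining unit rows preserves total
unimodularity. Each remaining row is minus the indicator of a row (`j = n`) or of a column
(`i = n`) of the `(n-1) × (n-1)` grid, so column `(a, b)` of what is left has exactly two nonzero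
entries, both `-1`, in the rows `(a, n)` and `(n, b)`: up to sign it is the incidence matrix of the
complete bipartite graph `K_{n-1,n-1}`. A square submatrix of such a matrix either has a column
with at most one nonzero entry, along which its determinant expands, or its rows on one side minus
its rows on the other side sum to zero.
-/

open Finset

/-- The integer matrix `M̄_{i,j}` (for `i ≠ j` in `[n]`, the last index playing the role of `n`). -/
def MbarZ (n : ℕ) (i j : Fin n) : Matrix (Fin (n - 1)) (Fin (n - 1)) ℤ :=
  Matrix.of fun a b =>
    if (a : ℕ) = (i : ℕ) ∧ (b : ℕ) = (j : ℕ) then 1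
    else if (a : ℕ) = (i : ℕ) ∧ (j : ℕ) = n - 1 then -1
    else if (i : ℕ) = n - 1 ∧ (b : ℕ) = (j : ℕ) then -1
    else 0

/-- The `n(n-1) × (n-1)²` matrix whose rows, indexed by ordered pairs `(i,j)` with `i ≠ j`,
are the matrices `M̄_{i,j}` written out as vectors of length `(n-1)²`. -/
def bigM (n : ℕ) :
    Matrix {e : Fin n × Fin n // e.1 ≠ e.2} (Fin (n - 1) × Fin (n - 1)) ℤ :=
  Matrix.of fun e ab => MbarZ n e.1.1 e.1.2 ab.1 ab.2

namespace Matrix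

variable {m n R : Type*} [CommRing R]

lemma mul_mem_range_signType_cast {a b : R} (ha : a ∈ Set.range SignType.cast)
    (hb : b ∈ Set.range SignType.cast) : a * b ∈ Set.range SignType.cast := by
  obtain ⟨s, rfl⟩ := ha
  obtain ⟨t, rfl⟩ := hb
  exact ⟨s * t, SignType.coe_mul s t⟩

lemma neg_one_pow_mem_range_signType_cast (i : ℕ) :
    (-1 : R) ^ i ∈ Set.range SignType.cast :=
  ⟨SignType.neg ^ i, by simp⟩

lemma det_mem_range_signType_cast_of_column_eq_single {k : ℕ}
    (S : Matrix (Fin (k + 1)) (Fin (k + 1)) R) {p q : Fin (k + 1)}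
    (hq : ∀ i ≠ p, S i q = 0) (hpq : S p q ∈ Set.range SignType.cast)
    (hminor : (S.submatrix p.succAbove q.succAbove).det ∈ Set.range SignType.cast) :
    S.det ∈ Set.range SignType.cast := by
  rw [det_succ_column S q, Fintype.sum_eq_single p fun i hi => by simp [hq i hi]]
  exact mul_mem_range_signType_cast
    (mul_mem_range_signType_cast (neg_one_pow_mem_range_signType_cast _) hpq) hminor

lemma det_eq_zero_of_vecMul_eq_zero [Fintype m] [DecidableEq m] {S : Matrix m m R} {v : m → R}
    (hv : v ᵥ* S = 0) {i : m} (hi : IsUnit (v i)) : S.det = 0 := by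
  have h : S.det • v = 0 := by
    rw [← vecMul_one (S.det • v), smul_vecMul, ← vecMul_smul, ← mul_adjugate, ← vecMul_vecMul,
      hv, zero_vecMul]
  exact hi.mul_left_eq_zero.mp (by simpa [mul_comm] using congrFun h i)

/-- A special case of the Heller–Tompkins criterion. -/
theorem isTotallyUnimodular_of_bipartite (A : Matrix m n R) (side : m → Bool)
    (hA : ∀ i j, A i j ∈ Set.range SignType.cast)
    (hside : ∀ i i' j, side i = side i' → A i j ≠ 0 → A i' j ≠ 0 → i = i')
    (hval : ∀ i i' j, A i j ≠ 0 → A i' j ≠ 0 → A i j = A i' j) :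
    A.IsTotallyUnimodular := by
  intro k
  induction k with
  | zero => exact fun _ _ _ _ => ⟨1, by simp⟩
  | succ k ih =>
    intro f g hf hg
    by_cases hpivot : ∃ q p, ∀ i ≠ p, A (f i) (g q) = 0
    · obtain ⟨q, p, hq⟩ := hpivot
      exact det_mem_range_signType_cast_of_column_eq_single _ hq (hA _ _)
        (ih _ _ (hf.comp Fin.succAbove_right_injective) (hg.comp Fin.succAbove_right_injective))
    push Not at hpivot
    -- every column of the submatrix meets both sides, so the signed sum of its rows vanishes
    let v : Fin (k + 1) → R := fun i => if side (f i) then 1 else -1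
    have hcol : ∀ q, ∑ i, v i * A (f i) (g q) = 0 := by
      intro q
      obtain ⟨i, -, hi⟩ := hpivot q 0
      obtain ⟨i', hii', hi'⟩ := hpivot q i
      have hsides : side (f i') ≠ side (f i) := fun h => hii' (hf (hside _ _ _ h hi' hi))
      rw [Fintype.sum_eq_add i' i hii', hval _ _ _ hi' hi, ← add_mul]
      · cases h : side (f i) <;> simp_all [v]
      · rintro l ⟨hli', hli⟩
        suffices A (f l) (g q) = 0 by simp [this]
        by_contra hl
        have : side (f l) = side (f i') ∨ side (f l) = side (f i) := by
          revert hsides; cases side (f l) <;> cases side (f i) <;> cases side (f i') <;> simp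
        rcases this with h | h
        · exact hli' (hf (hside _ _ _ h hl hi'))
        · exact hli (hf (hside _ _ _ h hl hi))
    refine ⟨0, (det_eq_zero_of_vecMul_eq_zero (v := v) (i := 0) ?_ ?_).symm⟩
    · ext q
      simpa [vecMul, dotProduct] using hcol q
    · by_cases h : side (f 0) <;> simp [v, h]

theorem isTotallyUnimodular_of_unitlike_rows [DecidableEq n] {A : Matrix m n R} (p : m → Prop)
    [DecidablePred p] (hA : (A.submatrix (Subtype.val : {i // p i} → m) id).IsTotallyUnimodular)
    (hunit : ∀ i, ¬p i → ∃ j, ∃ s : SignType, A i = Pi.single j (s : R)) :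
    A.IsTotallyUnimodular := by
  have hsplit : A = (fromRows (A.submatrix (Subtype.val : {i // p i} → m) id)
      (A.submatrix (Subtype.val : {i // ¬p i} → m) id)).submatrix (Equiv.sumCompl p).symm id := by
    ext i j
    by_cases hi : p i <;>
      simp [Equiv.sumCompl_symm_apply_of_pos, Equiv.sumCompl_symm_apply_of_neg, hi]
  rw [hsplit]
  exact (hA.fromRows_unitlike fun _ (i : {i // ¬p i}) => hunit i.1 i.2).submatrix _ _

end Matrix

section

variable {n : ℕ}

def TouchesLast (e : {e : Fin n × Fin n // e.1 ≠ e.2}) : Prop :=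
  (e.1.1 : ℕ) = n - 1 ∨ (e.1.2 : ℕ) = n - 1

instance : DecidablePred (TouchesLast (n := n)) := fun _ => instDecidableOr

lemma bigM_apply_mem_range_signType_cast (e : {e : Fin n × Fin n // e.1 ≠ e.2})
    (ab : Fin (n - 1) × Fin (n - 1)) : bigM n e ab ∈ Set.range SignType.cast := by
  rw [SignType.range_eq]
  simp only [bigM, MbarZ, Matrix.of_apply]
  split_ifs <;> simp

lemma bigM_row_eq_single (e : {e : Fin n × Fin n // e.1 ≠ e.2})
    (hi : (e.1.1 : ℕ) ≠ n - 1) (hj : (e.1.2 : ℕ) ≠ n - 1) :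
    bigM n e = Pi.single (⟨e.1.1, by omega⟩, ⟨e.1.2, by omega⟩) 1 := by
  ext ⟨a, b⟩
  simp only [bigM, MbarZ, Matrix.of_apply, Pi.single_apply, Prod.ext_iff, Fin.ext_iff]
  split_ifs <;> omega

lemma bigM_apply_of_snd_eq_last (e : {e : Fin n × Fin n // e.1 ≠ e.2}) (hj : (e.1.2 : ℕ) = n - 1)
    (ab : Fin (n - 1) × Fin (n - 1)) :
    bigM n e ab = if (ab.1 : ℕ) = e.1.1 then -1 else 0 := by
  have := Fin.val_injective.ne e.2
  simp only [bigM, MbarZ, Matrix.of_apply]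
  split_ifs <;> omega

lemma bigM_apply_of_fst_eq_last (e : {e : Fin n × Fin n // e.1 ≠ e.2}) (hi : (e.1.1 : ℕ) = n - 1)
    (ab : Fin (n - 1) × Fin (n - 1)) :
    bigM n e ab = if (ab.2 : ℕ) = e.1.2 then -1 else 0 := by
  have := Fin.val_injective.ne e.2
  simp only [bigM, MbarZ, Matrix.of_apply]
  split_ifs <;> omega

lemma bigM_apply_eq_neg_one_of_ne_zero {e : {e : Fin n × Fin n // e.1 ≠ e.2}} (he : TouchesLast e)
    {ab : Fin (n - 1) × Fin (n - 1)} (hab : bigM n e ab ≠ 0) : bigM n e ab = -1 := by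
  rcases he with hi | hj
  · rw [bigM_apply_of_fst_eq_last e hi] at hab ⊢
    split_ifs at hab ⊢ <;> trivial
  · rw [bigM_apply_of_snd_eq_last e hj] at hab ⊢
    split_ifs at hab ⊢ <;> trivial

lemma eq_of_bigM_apply_ne_zero {e e' : {e : Fin n × Fin n // e.1 ≠ e.2}} (he : TouchesLast e)
    (he' : TouchesLast e') (hside : (e.1.2 : ℕ) = n - 1 ↔ (e'.1.2 : ℕ) = n - 1)
    {ab : Fin (n - 1) × Fin (n - 1)} (hab : bigM n e ab ≠ 0) (hab' : bigM n e' ab ≠ 0) :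
    e = e' := by
  have h : (e.1.1 : ℕ) = e'.1.1 ∧ (e.1.2 : ℕ) = e'.1.2 := by
    by_cases hj : (e.1.2 : ℕ) = n - 1
    · have hj' := hside.mp hj
      rw [bigM_apply_of_snd_eq_last e hj] at hab
      rw [bigM_apply_of_snd_eq_last e' hj'] at hab'
      split_ifs at hab hab' <;> omega
    · have hi := he.resolve_right hj
      have hi' := he'.resolve_right (hj ∘ hside.mpr)
      rw [bigM_apply_of_fst_eq_last e hi] at hab
      rw [bigM_apply_of_fst_eq_last e' hi'] at hab'
      split_ifs at hab hab' <;> omega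
  exact Subtype.ext (Prod.ext (Fin.ext h.1) (Fin.ext h.2))

end

theorem bigM_isTotallyUnimodular (n : ℕ) : (bigM n).IsTotallyUnimodular := by
  refine Matrix.isTotallyUnimodular_of_unitlike_rows TouchesLast ?_ fun e he => ?_
  · refine Matrix.isTotallyUnimodular_of_bipartite _ (fun e => decide ((e.1.1.2 : ℕ) = n - 1))
      (fun e ab => bigM_apply_mem_range_signType_cast e.1 ab) (fun e e' ab hside hab hab' => ?_)
      (fun e e' ab hab hab' => ?_)
    · exact Subtype.ext (eq_of_bigM_apply_ne_zero e.2 e'.2 (by simpa using hside) hab hab')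
    · exact (bigM_apply_eq_neg_one_of_ne_zero e.2 hab).trans
        (bigM_apply_eq_neg_one_of_ne_zero e'.2 hab').symm
  · simp only [TouchesLast, not_or] at he
    exact ⟨_, 1, bigM_row_eq_single e he.1 he.2⟩

theorem stmt3_general (n : ℕ) (k : ℕ)
    (r : Fin k → {e : Fin n × Fin n // e.1 ≠ e.2})
    (c : Fin k → Fin (n - 1) × Fin (n - 1))
    (hr : Function.Injective r) (hc : Function.Injective c) :
    ((bigM n).submatrix r c).det ∈ ({0, 1, -1} : Set ℤ) := by
  have h := bigM_isTotallyUnimodular n k r c hr hc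
  rw [SignType.range_eq] at h
  simp only [Set.mem_insert_iff, Set.mem_singleton_iff] at h ⊢
  tauto

theorem stmt3 (n : ℕ) (hn : 2 ≤ n) (k : ℕ)
    (r : Fin k → {e : Fin n × Fin n // e.1 ≠ e.2})
    (c : Fin k → Fin (n - 1) × Fin (n - 1))
    (hr : Function.Injective r) (hc : Function.Injective c) :
    ((bigM n).submatrix r c).det ∈ ({0, 1, -1} : Set ℤ) :=
  stmt3_general n k r c hr hc
end

section
/- Let n ≥ 2. For every partition [n] = S ∪ T into two disjoint nonempty sets, u_{S,T}·M = 0, i.e., ∑_{i≠j} u_{S,T}(i,j)·M̄_{i,j} is the zero (n−1)×(n−1) matrix. -/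
open Finset

/-- `uM = ∑_{i ≠ j} u(i,j) · M̄_{i,j}`. -/
def uDotM (n : ℕ) (u : Fin n → Fin n → ℤ) : Matrix (Fin (n - 1)) (Fin (n - 1)) ℝ :=
  ∑ i, ∑ j, if i = j then 0 else (u i j : ℝ) • Mbar n i j

/-- The vector `u_{S,T}` for the partition `[n] = S ∪ Sᶜ`. -/
def uST (n : ℕ) (S : Finset (Fin n)) (i j : Fin n) : ℤ :=
  if i ∈ S ∧ j ∉ S then 1 else if i ∉ S ∧ j ∈ S then -1 else 0

/-!
Writing `χ` for the indicator of `S`, the vector `u_{S,T}` is the potential difference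
`u(i,j) = χ(i) - χ(j)`. Expanding the definition of `M̄`, the `(a,b)` entry of `uM` is
`u(a,b) - u(a,n) - u(n,b)`, which telescopes to `0` for every potential difference.
-/

lemma Mbar_apply {m : ℕ} (i j : Fin (m + 1)) (a b : Fin m) :
    Mbar (m + 1) i j a b =
      (if i = a.castSucc ∧ j = b.castSucc then 1 else 0)
        - (if i = a.castSucc ∧ j = Fin.last m then 1 else 0)
        - (if i = Fin.last m ∧ j = b.castSucc then 1 else 0) := by
  have := a.isLt
  have := b.isLt
  simp only [Mbar, Matrix.of_apply, Fin.ext_iff, Fin.val_castSucc, Fin.val_last]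
  split_ifs <;> first | omega | norm_num

lemma uDotM_apply {m : ℕ} (u : Fin (m + 1) → Fin (m + 1) → ℤ) (hu : ∀ i, u i i = 0)
    (a b : Fin m) :
    uDotM (m + 1) u a b =
      u a.castSucc b.castSucc - u a.castSucc (Fin.last m) - u (Fin.last m) b.castSucc := by
  have hdiag : ∀ i j,
      (if i = j then 0 else (u i j : ℝ) • Mbar (m + 1) i j) = (u i j : ℝ) • Mbar (m + 1) i j := by
    intro i j
    split_ifs with h <;> simp [h, hu]
  simp [uDotM, hdiag, Matrix.sum_apply, Mbar_apply, mul_sub, sum_sub_distrib, ite_and]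

lemma uDotM_eq_zero_of_eq_sub {n : ℕ} (u : Fin n → Fin n → ℤ) (x : Fin n → ℤ)
    (hux : ∀ i j, u i j = x i - x j) : uDotM n u = 0 := by
  ext a b
  obtain ⟨m, rfl⟩ : ∃ m, n = m + 1 := ⟨n - 1, by have := a.isLt; omega⟩
  rw [uDotM_apply u (fun i => by simp [hux]), hux, hux, hux, Matrix.zero_apply]
  push_cast
  ring

lemma uST_eq_sub {n : ℕ} (S : Finset (Fin n)) (i j : Fin n) :
    uST n S i j = (if i ∈ S then 1 else 0) - (if j ∈ S then 1 else 0) := by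
  unfold uST
  split_ifs <;> simp_all

theorem stmt5_general (n : ℕ) (S : Finset (Fin n)) :
    uDotM n (uST n S) = 0 :=
  uDotM_eq_zero_of_eq_sub _ _ (uST_eq_sub S)

theorem stmt5 (n : ℕ) (hn : 2 ≤ n) (S : Finset (Fin n))
    (hS : S.Nonempty) (hT : Sᶜ.Nonempty) :
    uDotM n (uST n S) = 0 :=
  stmt5_general n S
end

section
/- Let n ≥ 2 and let u ∈ ℤ^{n(n−1)} be a nonzero vector satisfying uM = 0. Then there exists a partition [n] = S ∪ T into two disjoint nonempty sets such that supp(u_{S,T}) ⊆ supp(u). -/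
open Finset

/-- Auxiliary: the (a,b) entry equation extracted from `uDotM n u = 0`. -/
lemma entry_eq (n : ℕ) (hn : 2 ≤ n) (u : Fin n → Fin n → ℤ)
    (hM : uDotM n u = 0) (a b : Fin (n - 1)) :
    (if (a : ℕ) = (b : ℕ) then (0 : ℝ)
      else (u ⟨a, a.2.trans (Nat.sub_lt (by omega) one_pos)⟩
              ⟨b, b.2.trans (Nat.sub_lt (by omega) one_pos)⟩ : ℝ))
      - (u ⟨a, a.2.trans (Nat.sub_lt (by omega) one_pos)⟩ ⟨n - 1, Nat.sub_lt (by omega) one_pos⟩ : ℝ)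
      - (u ⟨n - 1, Nat.sub_lt (by omega) one_pos⟩ ⟨b, b.2.trans (Nat.sub_lt (by omega) one_pos)⟩ : ℝ)
      = 0 := by
  have hNlt : n - 1 < n := Nat.sub_lt (by omega) one_pos
  set N : Fin n := ⟨n - 1, hNlt⟩ with hNdef
  set A : Fin n := ⟨a, a.2.trans hNlt⟩ with hAdef
  set B : Fin n := ⟨b, b.2.trans hNlt⟩ with hBdef
  have haN : (a : ℕ) ≠ n - 1 := by omega
  have hbN : (b : ℕ) ≠ n - 1 := by omega
  have hAN : A ≠ N := by simp [Fin.ext_iff]; omega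
  have hBN : B ≠ N := by simp [Fin.ext_iff]; omega
  set c : Fin n → Fin n → ℝ := fun i j => if i = j then 0 else (u i j : ℝ) with hc
  set m : Fin n → Fin n → ℝ := fun i j => Mbar n i j a b with hm
  have h0 : ∑ i, ∑ j, c i j * m i j = 0 := by
    have := congrFun (congrFun hM a) b
    simp only [uDotM, Matrix.zero_apply, Matrix.sum_apply] at this
    rw [← this]
    refine Finset.sum_congr rfl fun i _ => Finset.sum_congr rfl fun j _ => ?_
    by_cases h : i = j <;> simp [hc, hm, h]
  have hmval : ∀ i j : Fin n, m i j =
      if (a : ℕ) = (i : ℕ) ∧ (b : ℕ) = (j : ℕ) then 1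
      else if (a : ℕ) = (i : ℕ) ∧ (j : ℕ) = n - 1 then -1
      else if (i : ℕ) = n - 1 ∧ (b : ℕ) = (j : ℕ) then -1
      else 0 := fun i j => rfl
  -- outer sum reduces to i = A, i = N
  rw [Finset.sum_eq_add_of_mem A N (Finset.mem_univ _) (Finset.mem_univ _) hAN
    (fun i _ hi => ?_)] at h0
  · -- inner sums
    rw [Finset.sum_eq_add_of_mem B N (Finset.mem_univ _) (Finset.mem_univ _) hBN
      (fun j _ hj => ?_)] at h0
    · rw [Finset.sum_eq_single_of_mem B (Finset.mem_univ _) (fun j _ hj => ?_)] at h0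
      · have hmAB : m A B = 1 := by rw [hmval]; simp [hAdef, hBdef]
        have hmAN : m A N = -1 := by rw [hmval]; simp [haN, hbN, hAdef, hNdef]
        have hmNB : m N B = -1 := by rw [hmval]; simp [haN, hbN, hNdef, hBdef]
        have hcAN : c A N = u A N := by simp [hc, hAN]
        have hcNB : c N B = u N B := by simp [hc, hBN.symm]
        have hcAB : c A B = if (a : ℕ) = (b : ℕ) then 0 else (u A B : ℝ) := by
          simp only [hc, Fin.ext_iff, hAdef, hBdef]
        rw [hmAB, hmAN, hmNB, hcAN, hcNB, hcAB] at h0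
        ring_nf at h0 ⊢
        linarith [h0]
      · -- i = N, j ≠ B : m N j = 0
        have hbj : (b : ℕ) ≠ (j : ℕ) := fun h => hj (Fin.ext h.symm)
        have : m N j = 0 := by rw [hmval]; simp [haN, hbj, hNdef]
        rw [this, mul_zero]
    · -- i = A, j ∉ {B, N}
      have hbj : (b : ℕ) ≠ (j : ℕ) := fun h => hj.1 (Fin.ext h.symm)
      have hjN : (j : ℕ) ≠ n - 1 := fun h => hj.2 (Fin.ext h)
      have : m A j = 0 := by rw [hmval]; simp [haN, hbj, hjN]
      rw [this, mul_zero]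
  · -- i ∉ {A, N} : whole inner sum vanishes
    refine Finset.sum_eq_zero fun j _ => ?_
    have hai : (a : ℕ) ≠ (i : ℕ) := fun h => hi.1 (Fin.ext h.symm)
    have hiN : (i : ℕ) ≠ n - 1 := fun h => hi.2 (Fin.ext h)
    have : m i j = 0 := by rw [hmval]; simp [hai, hiN]
    rw [this, mul_zero]

/-- The support `supp(u)` of a vector indexed by ordered pairs. -/
def suppV (n : ℕ) (u : Fin n → Fin n → ℤ) : Set (Fin n × Fin n) :=
  {e | u e.1 e.2 ≠ 0}

theorem stmt6 (n : ℕ) (hn : 2 ≤ n) (u : Fin n → Fin n → ℤ)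
    (hdiag : ∀ i, u i i = 0) (hu : u ≠ 0) (hM : uDotM n u = 0) :
    ∃ S : Finset (Fin n), S.Nonempty ∧ Sᶜ.Nonempty ∧
      suppV n (uST n S) ⊆ suppV n u := by
  have hNlt : n - 1 < n := Nat.sub_lt (by omega) one_pos
  set N : Fin n := ⟨n - 1, hNlt⟩ with hNdef
  set f : Fin n → ℤ := fun i => u i N with hf
  -- u N j = - u j N for every j ≠ N with j < n-1
  have hanti : ∀ j : Fin n, (j : ℕ) < n - 1 → u N j = - u j N := by
    intro j hj
    have h := entry_eq n hn u hM ⟨j, hj⟩ ⟨j, hj⟩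
    rw [if_pos rfl] at h
    have h' : (0 : ℝ) - (u j N : ℝ) - (u N j : ℝ) = 0 := h
    have : (u N j : ℝ) = -(u j N : ℝ) := by linarith
    exact_mod_cast this
  have key : ∀ i j : Fin n, u i j = f i - f j := by
    intro i j
    by_cases hij : i = j
    · simp [hij, hdiag]
    by_cases hiN : i = N
    · by_cases hjN : j = N
      · simp [hiN, hjN, hdiag]
      · have hj : (j : ℕ) < n - 1 := by
          have := j.2; have : (j : ℕ) ≠ n - 1 := fun h => hjN (Fin.ext h)
          omega
        rw [hiN, hanti j hj]
        simp [hf, hdiag]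
    · by_cases hjN : j = N
      · rw [hjN]; simp [hf, hdiag]
      · have hi : (i : ℕ) < n - 1 := by
          have : (i : ℕ) ≠ n - 1 := fun h => hiN (Fin.ext h); omega
        have hj : (j : ℕ) < n - 1 := by
          have : (j : ℕ) ≠ n - 1 := fun h => hjN (Fin.ext h); omega
        have h := entry_eq n hn u hM ⟨i, hi⟩ ⟨j, hj⟩
        have hij' : (i : ℕ) ≠ (j : ℕ) := fun h => hij (Fin.ext h)
        rw [if_neg hij'] at h
        have h' : (u i j : ℝ) - (u i N : ℝ) - (u N j : ℝ) = 0 := h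
        have h3 : (u i j : ℝ) = (u i N : ℝ) + (u N j : ℝ) := by linarith
        have h4 : u i j = u i N + u N j := by exact_mod_cast h3
        rw [h4, hanti j hj]; simp [hf]; omega
  -- f is not constant
  obtain ⟨i0, j0, hij0⟩ : ∃ i j, u i j ≠ 0 := by
    by_contra h; push_neg at h
    exact hu (funext fun i => funext fun j => h i j)
  have hfne : f i0 ≠ f j0 := by
    intro h; apply hij0; rw [key i0 j0, h, sub_self]
  -- take S = set of maximizers of f
  obtain ⟨m, _, hm⟩ := Finset.exists_max_image (Finset.univ : Finset (Fin n)) f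
    ⟨i0, Finset.mem_univ i0⟩
  refine ⟨Finset.univ.filter (fun i => f i = f m), ⟨m, by simp⟩, ?_, ?_⟩
  · rcases lt_or_gt_of_ne hfne with h | h
    · refine ⟨i0, ?_⟩
      simp only [Finset.mem_compl, Finset.mem_filter, Finset.mem_univ, true_and]
      have := hm j0 (Finset.mem_univ j0); omega
    · refine ⟨j0, ?_⟩
      simp only [Finset.mem_compl, Finset.mem_filter, Finset.mem_univ, true_and]
      have := hm i0 (Finset.mem_univ i0); omega
  · rintro ⟨i, j⟩ hij
    simp only [suppV, uST, Set.mem_setOf_eq] at hij ⊢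
    rw [key i j]
    by_cases hi : f i = f m <;> by_cases hj : f j = f m <;>
      simp [hi, hj] at hij ⊢
    · have := hm j (Finset.mem_univ j); omega
    · have := hm i (Finset.mem_univ i); omega
end

section
/- Let n ≥ 2, let u ∈ ℤ^{n(n−1)} satisfy uM = 0, and suppose supp(u) = supp(u_{S,T}) for some partition [n] = S ∪ T into two disjoint nonempty sets. Then there exists c ∈ ℤ such that u = c·u_{S,T}. -/
open Finset

/-!
Writing `p` for the last index, the entry `(a, b)` of `uM` is `u(a,b) - u(a,p) - u(p,b)`, so
`uM = 0` together with a zero diagonal says exactly that `u` is a gradient: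
`u(i,j) = v(i) - v(j)` with `v(i) = u(i,p)`. The support condition gives the zero diagonal, and
it makes `v(i) - v(j)` vanish whenever `i, j` lie on the same side of the partition, so `v` is
constant on `S` and on `T`; then `c` is the difference of the two constants.
-/

lemma Mbar_apply_s7 (n : ℕ) (hn : 0 < n) (i j : Fin n) (a b : Fin (n - 1)) :
    Mbar n i j a b =
      (if i = a.castLE (n.sub_le 1) then (1 : ℝ) else 0) *
          (if j = b.castLE (n.sub_le 1) then 1 else 0)
        - (if i = a.castLE (n.sub_le 1) then (1 : ℝ) else 0) *
          (if j = ⟨n - 1, by omega⟩ then 1 else 0)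
        - (if i = ⟨n - 1, by omega⟩ then (1 : ℝ) else 0) *
          (if j = b.castLE (n.sub_le 1) then 1 else 0) := by
  have := a.2
  have := b.2
  simp only [Mbar, Matrix.of_apply, Fin.ext_iff, Fin.val_castLE]
  split_ifs <;> norm_num <;> omega

lemma uDotM_apply_s7 (n : ℕ) (hn : 0 < n) (u : Fin n → Fin n → ℤ) (hdiag : ∀ i, u i i = 0)
    (a b : Fin (n - 1)) :
    uDotM n u a b =
      (u (a.castLE (n.sub_le 1)) (b.castLE (n.sub_le 1)) : ℝ)
        - u (a.castLE (n.sub_le 1)) ⟨n - 1, by omega⟩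
        - u ⟨n - 1, by omega⟩ (b.castLE (n.sub_le 1)) := by
  have hsum : uDotM n u a b = ∑ i, ∑ j, (u i j : ℝ) * Mbar n i j a b := by
    simp only [uDotM, Matrix.sum_apply]
    refine sum_congr rfl fun i _ => sum_congr rfl fun j _ => ?_
    split_ifs with hij
    · simp [hij, hdiag]
    · simp
  simp only [hsum, Mbar_apply_s7 n hn _ _ a b, mul_sub, sum_sub_distrib, mul_ite, mul_one,
    mul_zero, sum_ite_eq', mem_univ, if_true]

lemma eq_add_of_uDotM_eq_zero (n : ℕ) (hn : 0 < n) (u : Fin n → Fin n → ℤ)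
    (hdiag : ∀ i, u i i = 0) (hM : uDotM n u = 0) (i j : Fin n)
    (hi : i ≠ ⟨n - 1, by omega⟩) (hj : j ≠ ⟨n - 1, by omega⟩) :
    u i j = u i ⟨n - 1, by omega⟩ + u ⟨n - 1, by omega⟩ j := by
  have hlt : ∀ k : Fin n, k ≠ ⟨n - 1, by omega⟩ → (k : ℕ) < n - 1 := fun k hk => by
    have := k.2
    have : (k : ℕ) ≠ n - 1 := fun h => hk (Fin.ext h)
    omega
  have h := congrFun (congrFun hM ⟨i, hlt i hi⟩) ⟨j, hlt j hj⟩
  rw [uDotM_apply_s7 n hn u hdiag, Matrix.zero_apply, Fin.castLE_mk, Fin.castLE_mk] at h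
  have h' : u i j - u i ⟨n - 1, by omega⟩ - u ⟨n - 1, by omega⟩ j = 0 := by exact_mod_cast h
  omega

lemma exists_eq_sub_of_eq_add {ι : Type*} (u : ι → ι → ℤ) (p : ι) (hdiag : ∀ i, u i i = 0)
    (h : ∀ i j, i ≠ p → j ≠ p → u i j = u i p + u p j) :
    ∃ v : ι → ℤ, ∀ i j, u i j = v i - v j := by
  have hanti : ∀ j, u p j = -u j p := fun j => by
    by_cases hj : j = p
    · simp [hj, hdiag]
    · have := h j j hj hj
      rw [hdiag] at this
      omega
  refine ⟨fun i => u i p, fun i j => ?_⟩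
  by_cases hi : i = p
  · simp only [hi, hanti j, hdiag]
    ring
  by_cases hj : j = p
  · simp [hj, hdiag]
  · rw [h i j hi hj, hanti]
    ring

lemma uST_eq_zero_iff (n : ℕ) (S : Finset (Fin n)) (i j : Fin n) :
    uST n S i j = 0 ↔ (i ∈ S ↔ j ∈ S) := by
  unfold uST
  by_cases hi : i ∈ S <;> by_cases hj : j ∈ S <;> simp [hi, hj]

lemma eq_zero_of_suppV_eq_suppV_uST (n : ℕ) (u : Fin n → Fin n → ℤ) (S : Finset (Fin n))
    (hsupp : suppV n u = suppV n (uST n S)) (i j : Fin n) (hij : i ∈ S ↔ j ∈ S) :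
    u i j = 0 := by
  have := Set.ext_iff.1 hsupp (i, j)
  simp only [suppV, Set.mem_ofPred_eq, ne_eq, not_iff_not] at this
  exact this.2 ((uST_eq_zero_iff n S i j).2 hij)

lemma exists_sub_eq_mul_uST (n : ℕ) (S : Finset (Fin n)) (hS : S.Nonempty) (hT : Sᶜ.Nonempty)
    (v : Fin n → ℤ) (hv : ∀ i j, (i ∈ S ↔ j ∈ S) → v i = v j) :
    ∃ c : ℤ, ∀ i j, v i - v j = c * uST n S i j := by
  obtain ⟨s, hs⟩ := hS
  obtain ⟨t, ht⟩ := hT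
  rw [mem_compl] at ht
  have hv' : ∀ i, v i = if i ∈ S then v s else v t := fun i => by
    split_ifs with hi
    · exact hv i s (by tauto)
    · exact hv i t (by tauto)
  refine ⟨v s - v t, fun i j => ?_⟩
  rw [hv' i, hv' j]
  by_cases hi : i ∈ S <;> by_cases hj : j ∈ S <;> simp [uST, hi, hj]

theorem stmt7_general (n : ℕ) (u : Fin n → Fin n → ℤ) (hM : uDotM n u = 0)
    (S : Finset (Fin n)) (hS : S.Nonempty) (hT : Sᶜ.Nonempty)
    (hsupp : suppV n u = suppV n (uST n S)) :
    ∃ c : ℤ, ∀ i j, u i j = c * uST n S i j := by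
  have hsame := eq_zero_of_suppV_eq_suppV_uST n u S hsupp
  have hdiag : ∀ i, u i i = 0 := fun i => hsame i i Iff.rfl
  have hn : 0 < n := hS.choose.pos
  obtain ⟨v, hv⟩ := exists_eq_sub_of_eq_add u _ hdiag (eq_add_of_uDotM_eq_zero n hn u hdiag hM)
  obtain ⟨c, hc⟩ := exists_sub_eq_mul_uST n S hS hT v fun i j hij => by
    rw [← sub_eq_zero, ← hv]
    exact hsame i j hij
  exact ⟨c, fun i j => (hv i j).trans (hc i j)⟩

theorem stmt7 (n : ℕ) (hn : 2 ≤ n) (u : Fin n → Fin n → ℤ)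
    (hdiag : ∀ i, u i i = 0) (hM : uDotM n u = 0)
    (S : Finset (Fin n)) (hS : S.Nonempty) (hT : Sᶜ.Nonempty)
    (hsupp : suppV n u = suppV n (uST n S)) :
    ∃ c : ℤ, ∀ i j, u i j = c * uST n S i j :=
  stmt7_general n u hM S hS hT hsupp
end

section
/- Let n ≥ 2 and fix ℓ ∈ [n]. For a set σ of ordered pairs (i,j) with i ≠ j in [n], say that σ is a transversal if for every subset S of [n] with ℓ ∈ S and S ≠ [n] there exists (s,t) ∈ σ with s ∈ S and t ∉ S. Then σ is a transversal that is minimal with respect to inclusion (no proper subset of σ is a transversal) if and only if σ = E(T) for some ℓ-arborescence T ∈ Arb(ℓ,n). -/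
open Finset

/-- The set of `ℓ`-arborescences on `[n]`, encoded by their parent functions. -/
def arbs (n : ℕ) (ℓ : Fin n) : Finset (Fin n → Fin n) :=
  Finset.univ.filter fun p => p ℓ = ℓ ∧ ∀ v, p^[n] v = ℓ

/-- The edge set of the arborescence with parent function `p`. -/
def arbEdges (n : ℕ) (ℓ : Fin n) (p : Fin n → Fin n) : Finset (Fin n × Fin n) :=
  Finset.univ.filter fun e => e.2 ≠ ℓ ∧ p e.2 = e.1

/-- `σ` is a transversal: for every `S ⊆ [n]` with `ℓ ∈ S` and `S ≠ [n]` there is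
`(s,t) ∈ σ` with `s ∈ S` and `t ∉ S`. -/
def IsTransversal (n : ℕ) (ℓ : Fin n) (σ : Finset (Fin n × Fin n)) : Prop :=
  ∀ S : Finset (Fin n), ℓ ∈ S → S ≠ Finset.univ → ∃ e ∈ σ, e.1 ∈ S ∧ e.2 ∉ S

namespace Stmt9Aux

variable {n : ℕ}

/-- `b` is reachable from `a` in exactly `m` steps along edges of `σ`. -/
def reachN (σ : Finset (Fin n × Fin n)) : ℕ → Fin n → Fin n → Prop
  | 0, a, b => a = b
  | k+1, a, b => ∃ c, reachN σ k a c ∧ (c, b) ∈ σ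

lemma reachN_mono {σ τ : Finset (Fin n × Fin n)} (hst : σ ⊆ τ) :
    ∀ {m : ℕ} {a b : Fin n}, reachN σ m a b → reachN τ m a b := by
  intro m
  induction m with
  | zero => intro a b h; exact h
  | succ k ih => rintro a b ⟨c, hc, hcb⟩; exact ⟨c, ih hc, hst hcb⟩

lemma reach_cross {τ : Finset (Fin n × Fin n)} {S : Finset (Fin n)} :
    ∀ {m : ℕ} {a b : Fin n}, reachN τ m a b → a ∈ S → b ∉ S →
      ∃ e ∈ τ, e.1 ∈ S ∧ e.2 ∉ S := by
  intro m
  induction m with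
  | zero => intro a b h ha hb; cases h; exact absurd ha hb
  | succ k ih =>
    rintro a b ⟨c, hc, hcb⟩ ha hb
    by_cases hcS : c ∈ S
    · exact ⟨(c, b), hcb, hcS, hb⟩
    · exact ih hc ha hcS

lemma transversal_iff_reach (ℓ : Fin n) (σ : Finset (Fin n × Fin n)) :
    IsTransversal n ℓ σ ↔ ∀ v, ∃ m, reachN σ m ℓ v := by
  classical
  constructor
  · intro h v
    by_contra hv
    set S : Finset (Fin n) := univ.filter (fun w => ∃ m, reachN σ m ℓ w) with hS
    have hl : ℓ ∈ S := mem_filter.2 ⟨mem_univ _, 0, rfl⟩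
    have hSne : S ≠ univ := by
      intro he
      have hvS : v ∈ S := by rw [he]; exact mem_univ v
      exact hv (mem_filter.1 hvS).2
    obtain ⟨e, heσ, h1, h2⟩ := h S hl hSne
    obtain ⟨m, hm⟩ := (mem_filter.1 h1).2
    exact h2 (mem_filter.2 ⟨mem_univ _, m+1, e.1, hm, by simpa using heσ⟩)
  · intro h S hl hS
    obtain ⟨b, hb⟩ : ∃ b, b ∉ S := by
      by_contra hc
      push_neg at hc
      exact hS (eq_univ_iff_forall.2 hc)
    obtain ⟨m, hm⟩ := h b
    exact reach_cross hm hl hb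

lemma reach_avoid {σ : Finset (Fin n × Fin n)} {v : Fin n} :
    ∀ {m : ℕ} {a b : Fin n}, reachN σ m a b →
      (∃ j ≤ m, reachN σ j a v) ∨ reachN (σ.filter fun f => f.2 ≠ v) m a b := by
  intro m
  induction m with
  | zero => intro a b h; exact Or.inr h
  | succ k ih =>
    rintro a b ⟨c, hc, hcb⟩
    rcases ih hc with ⟨j, hj, hr⟩ | hr
    · exact Or.inl ⟨j, hj.trans (Nat.le_succ k), hr⟩
    · by_cases hbv : b = v
      · exact Or.inl ⟨k+1, le_refl _, c, hc, hbv ▸ hcb⟩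
      · exact Or.inr ⟨c, hr, mem_filter.2 ⟨hcb, hbv⟩⟩

lemma reach_erase {σ : Finset (Fin n × Fin n)} {ℓ : Fin n} {e' : Fin n × Fin n}
    (hv : ∃ m, reachN (σ.erase e') m ℓ e'.2) :
    ∀ {m : ℕ} {v : Fin n}, reachN σ m ℓ v → ∃ m', reachN (σ.erase e') m' ℓ v := by
  intro m
  induction m with
  | zero => intro v h; exact ⟨0, h⟩
  | succ k ih =>
    rintro v ⟨c, hc, hcv⟩
    obtain ⟨m', hm'⟩ := ih hc
    by_cases he : (c, v) = e'
    · subst he; exact hv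
    · exact ⟨m'+1, c, hm', mem_erase.2 ⟨he, hcv⟩⟩

end Stmt9Aux

open Stmt9Aux in
theorem stmt9 (n : ℕ) (hn : 2 ≤ n) (ℓ : Fin n) (σ : Finset (Fin n × Fin n))
    (hσ : ∀ e ∈ σ, e.1 ≠ e.2) :
    (IsTransversal n ℓ σ ∧ ∀ τ ⊆ σ, τ ≠ σ → ¬IsTransversal n ℓ τ) ↔
      ∃ p ∈ arbs n ℓ, σ = arbEdges n ℓ p := by
  classical
  constructor
  · rintro ⟨h1, h2⟩
    have hreach : ∀ v, ∃ m, reachN σ m ℓ v := (transversal_iff_reach ℓ σ).1 h1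
    -- Step A: no edge into ℓ
    have hA : ∀ u, (u, ℓ) ∉ σ := by
      intro u hu
      have hne : σ.erase (u, ℓ) ≠ σ := by
        intro he; exact (notMem_erase (u, ℓ) σ) (he.symm ▸ hu)
      refine h2 _ (erase_subset _ _) hne ?_
      refine (transversal_iff_reach ℓ _).2 ?_
      intro v
      obtain ⟨m, hm⟩ := hreach v
      exact reach_erase (e' := (u, ℓ)) ⟨0, rfl⟩ hm
    -- Step B: every non-root has an incoming edge
    have hB : ∀ v, v ≠ ℓ → ∃ u, (u, v) ∈ σ := by
      intro v hv
      have hl : ℓ ∈ univ.erase v := mem_erase.2 ⟨Ne.symm hv, mem_univ _⟩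
      have hne : (univ.erase v : Finset (Fin n)) ≠ univ := by
        intro he; exact (notMem_erase v univ) (he.symm ▸ mem_univ v)
      obtain ⟨e, heσ, h1e, h2e⟩ := h1 (univ.erase v) hl hne
      have : e.2 = v := by
        by_contra hc
        exact h2e (mem_erase.2 ⟨hc, mem_univ _⟩)
      exact ⟨e.1, by rw [← this]; simpa using heσ⟩
    -- Step C: incoming edges are unique
    have hC : ∀ v u u', (u, v) ∈ σ → (u', v) ∈ σ → u = u' := by
      intro v u u' hu hu'
      by_cases hvl : v = ℓ
      · exact absurd (hvl ▸ hu) (hA u)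
      have hex : ∃ m, reachN σ m ℓ v := hreach v
      have hkr : reachN σ (Nat.find hex) ℓ v := Nat.find_spec hex
      have hk0 : Nat.find hex ≠ 0 := by
        intro h0
        rw [h0] at hkr
        exact hvl hkr.symm
      obtain ⟨j, hj⟩ := Nat.exists_eq_succ_of_ne_zero hk0
      rw [hj] at hkr
      obtain ⟨c, hc, hcv⟩ := hkr
      have huc : ∀ w, (w, v) ∈ σ → w = c := by
        intro w hw
        by_contra hwc
        have hvt : ∃ m', reachN (σ.erase (w, v)) m' ℓ v := by
          rcases reach_avoid (v := v) hc with ⟨i, hi, hr⟩ | hr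
          · exact absurd hr (Nat.find_min hex (by omega))
          · have hsub : (σ.filter fun f => f.2 ≠ v) ⊆ σ.erase (w, v) := by
              intro f hf
              rw [mem_filter] at hf
              refine mem_erase.2 ⟨?_, hf.1⟩
              rintro rfl
              exact hf.2 rfl
            refine ⟨j + 1, c, reachN_mono hsub hr, mem_erase.2 ⟨?_, hcv⟩⟩
            intro h
            injection h with h1 h2
            exact hwc h1.symm
        have hne' : σ.erase (w, v) ≠ σ := by
          intro he; exact (notMem_erase (w, v) σ) (he.symm ▸ hw)
        refine h2 _ (erase_subset _ _) hne' ?_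
        refine (transversal_iff_reach ℓ _).2 ?_
        intro x
        obtain ⟨m, hm⟩ := hreach x
        exact reach_erase (e' := (w, v)) hvt hm
      exact (huc u hu).trans (huc u' hu').symm
    -- the parent function
    set p : Fin n → Fin n := fun v => if h : ∃ u, (u, v) ∈ σ then h.choose else ℓ with hp
    have hpmem : ∀ v, v ≠ ℓ → (p v, v) ∈ σ := by
      intro v hv
      have hex := hB v hv
      simp only [hp, dif_pos hex]
      exact hex.choose_spec
    have hpl : p ℓ = ℓ := by
      have hno : ¬ ∃ u, (u, ℓ) ∈ σ := by
        rintro ⟨u, hu⟩; exact hA u hu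
      simp only [hp, dif_neg hno]
    have hpu : ∀ u v, (u, v) ∈ σ → p v = u := by
      intro u v huv
      have hv : v ≠ ℓ := by rintro rfl; exact hA u huv
      exact hC v (p v) u (hpmem v hv) huv
    have hfix : ∀ m, p^[m] ℓ = ℓ := fun m => Function.iterate_fixed hpl m
    have hreachp : ∀ m v, reachN σ m ℓ v → ∃ k, p^[k] v = ℓ := by
      intro m
      induction m with
      | zero => intro v h; exact ⟨0, h.symm⟩
      | succ j ih =>
        rintro v ⟨c, hc, hcv⟩
        obtain ⟨k, hk⟩ := ih c hc
        refine ⟨k + 1, ?_⟩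
        rw [Function.iterate_succ_apply, hpu c v hcv, hk]
    have hpn : ∀ v, p^[n] v = ℓ := by
      intro v
      obtain ⟨m, hm⟩ := hreach v
      have hex : ∃ k, p^[k] v = ℓ := hreachp m v hm
      have hks : p^[Nat.find hex] v = ℓ := Nat.find_spec hex
      have key : ∀ i j : ℕ, i < j → j ≤ Nat.find hex → p^[i] v = p^[j] v → False := by
        intro i j hij hjk heq
        have h1 : p^[(Nat.find hex - j) + j] v = ℓ := by
          rw [Nat.sub_add_cancel hjk]; exact hks
        rw [Function.iterate_add_apply, ← heq, ← Function.iterate_add_apply] at h1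
        exact Nat.find_min hex (by omega) h1
      have hinj : Function.Injective (fun i : Fin (Nat.find hex + 1) => p^[(i : ℕ)] v) := by
        intro i j hij
        simp only at hij
        by_contra hne
        have hne' : (i : ℕ) ≠ (j : ℕ) := fun h => hne (Fin.ext h)
        rcases lt_or_gt_of_ne hne' with h | h
        · exact key i j h (Nat.lt_succ_iff.1 j.isLt) hij
        · exact key j i h (Nat.lt_succ_iff.1 i.isLt) hij.symm
      have hcard : Nat.find hex + 1 ≤ n := by
        simpa using Fintype.card_le_of_injective _ hinj
      have h2' : p^[(n - Nat.find hex) + Nat.find hex] v = ℓ := by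
        rw [Function.iterate_add_apply, hks, hfix]
      rwa [Nat.sub_add_cancel (by omega)] at h2'
    refine ⟨p, ?_, ?_⟩
    · simp only [arbs, mem_filter, mem_univ, true_and]
      exact ⟨hpl, hpn⟩
    · ext e
      obtain ⟨a, b⟩ := e
      simp only [arbEdges, mem_filter, mem_univ, true_and]
      constructor
      · intro he
        have h2l : b ≠ ℓ := by rintro rfl; exact hA a he
        exact ⟨h2l, hpu a b he⟩
      · rintro ⟨h2l, hpe⟩
        have hmem := hpmem b h2l
        rw [hpe] at hmem
        exact hmem
  · rintro ⟨p, hp, rfl⟩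
    simp only [arbs, mem_filter, mem_univ, true_and] at hp
    obtain ⟨hpl, hpn⟩ := hp
    have hfix : ∀ m, p^[m] ℓ = ℓ := fun m => Function.iterate_fixed hpl m
    constructor
    · intro S hlS hSu
      obtain ⟨v, hv⟩ : ∃ v, v ∉ S := by
        by_contra hc; push_neg at hc; exact hSu (eq_univ_iff_forall.2 hc)
      have hex : ∃ i, p^[i] v ∈ S := ⟨n, by rw [hpn v]; exact hlS⟩
      have hks : p^[Nat.find hex] v ∈ S := Nat.find_spec hex
      have hk0 : Nat.find hex ≠ 0 := by
        intro h; rw [h] at hks; exact hv hks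
      obtain ⟨j, hj⟩ := Nat.exists_eq_succ_of_ne_zero hk0
      have hjS : p^[j] v ∉ S := Nat.find_min hex (by omega)
      refine ⟨(p (p^[j] v), p^[j] v), ?_, ?_, hjS⟩
      · simp only [arbEdges, mem_filter, mem_univ, true_and]
        constructor
        · intro h
          exact hjS (by rw [h]; exact hlS)
        · trivial
      · rw [← Function.iterate_succ_apply' p j v, ← hj]
        exact hks
    · intro τ hτσ hτne htr
      obtain ⟨e, heσ, heτ⟩ : ∃ e, e ∈ arbEdges n ℓ p ∧ e ∉ τ := by
        by_contra hc
        push_neg at hc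
        exact hτne (Finset.Subset.antisymm hτσ hc)
      obtain ⟨a, b⟩ := e
      simp only [arbEdges, mem_filter, mem_univ, true_and] at heσ
      obtain ⟨hbl, hpb⟩ := heσ
      set S : Finset (Fin n) := univ.filter (fun u => ∀ k, p^[k] u ≠ b) with hS
      have hlS : ℓ ∈ S := by
        refine mem_filter.2 ⟨mem_univ _, fun k h => hbl ?_⟩
        rw [hfix k] at h
        exact h.symm
      have hbS : b ∉ S := by
        simp only [hS, mem_filter, mem_univ, true_and]
        intro h
        exact h 0 rfl
      have hSne : S ≠ univ := by
        intro h
        exact hbS (by rw [h]; exact mem_univ b)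
      obtain ⟨f, hfτ, hf1, hf2⟩ := htr S hlS hSne
      obtain ⟨x, y⟩ := f
      have hfσ := hτσ hfτ
      simp only [arbEdges, mem_filter, mem_univ, true_and] at hfσ
      obtain ⟨hyl, hpy⟩ := hfσ
      simp only [hS, mem_filter, mem_univ, true_and, not_forall, not_not, ne_eq] at hf2
      obtain ⟨k, hk⟩ := hf2
      cases k with
      | zero =>
        rw [Function.iterate_zero_apply] at hk
        subst hk
        have hxa : x = a := hpy.symm.trans hpb
        subst hxa
        exact heτ hfτ
      | succ j =>
        have hxS : p^[j] x ≠ b := by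
          have := (mem_filter.1 hf1).2
          exact this j
        rw [← hpy, ← Function.iterate_succ_apply] at hxS
        exact hxS hk
end

section
/- Let n ≥ 2 and fix ℓ ∈ [n]. For T ∈ Arb(ℓ,n) let D̄_T ⊆ ℝ^{(n−1)×(n−1)} be the convex cone generated by {M̄_{i,j} : (i,j) ∉ E(T)}, and let D̄_n be the convex cone generated by all M̄_{i,j} with i ≠ j in [n]. Then: (a) for each T ∈ Arb(ℓ,n), the (n−1)² matrices {M̄_{i,j} : (i,j) ∉ E(T)} form a ℤ-basis of the lattice ℤ^{(n−1)×(n−1)} of integer (n−1)×(n−1) matrices (so D̄_T is a full-dimensional unimodular simplicial cone); (b) the union of the cones D̄_T over all T ∈ Arb(ℓ,n) equals D̄_n; (c) for distinct T, T' ∈ Arb(ℓ,n), the topological interiors of D̄_T and D̄_{T'} are disjoint. In other words, the cones {D̄_T : T ∈ Arb(ℓ,n)} form a triangulation of D̄_n into unimodular cones. -/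
open Finset

/-- Directed edges between distinct vertices that are not edges of the arborescence. -/
def offEdges (n : ℕ) (ℓ : Fin n) (p : Fin n → Fin n) : Finset (Fin n × Fin n) :=
  Finset.univ.filter fun e => e.1 ≠ e.2 ∧ e ∉ arbEdges n ℓ p

/-!
Write `M̄_{i,j} = f_i f_jᵀ`, where `f_1, …, f_{n-1}` are the unit vectors of `ℝ^{n-1}` and
`f_n = -(f_1 + ⋯ + f_{n-1})`. Since `∑ f_i = 0`, a combination `∑ λ_{ij} M̄_{i,j}` with
`λ_{ii} = 0` vanishes exactly when `λ_{ij} = u_i - u_j` for some potential `u` on the vertices.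

(a) Every integer matrix is a combination of the `M̄_{i,j}`; adding the potential given by the
weighted depth in `T` makes the coefficients on the edges of `T` vanish. Conversely a potential
killing all edges of `T` is constant, so the coefficients are unique.
(b) For nonnegative `λ`, a shortest-path arborescence from `ℓ` (Dijkstra) with distances `r` has
nonnegative reduced costs `λ_{ij} + r_i - r_j`, vanishing on its edges.
(c) A point interior to the cones of `T` and `T'` has positive coordinates in both; their
difference is a potential that increases along `T` and decreases along `T'`, hence is constant.
So the two coordinate vectors agree, which fails on an edge of `T` that is not in `T'`.
-/

section Sums

variable {α M : Type*} [Fintype α] [AddCommMonoid M] {P : α → Prop} [DecidablePred P]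
  [Fintype (Subtype P)]

lemma sum_subtype_of_eq_zero {f : α → M} (hf : ∀ a, ¬P a → f a = 0) :
    ∑ k : Subtype P, f k = ∑ a, f a := by
  rw [← Finset.sum_subtype {a | P a} (by simp),
    Finset.sum_filter_of_ne fun a _ => not_imp_comm.mp (hf a)]

lemma sum_dite_smul {S : Type*} [Semiring S] [Module S M] (c : Subtype P → S) (v : α → M) :
    ∑ a, (if h : P a then c ⟨a, h⟩ else 0) • v a = ∑ k : Subtype P, c k • v k := by
  rw [← sum_subtype_of_eq_zero fun a ha => by rw [dif_neg ha, zero_smul]]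
  exact Finset.sum_congr rfl fun k _ => by rw [dif_pos k.2]

end Sums

lemma Set.EqOn.iterate {α : Type*} {f g : α → α} {s : Set α} (h : Set.EqOn f g s)
    (hf : Set.MapsTo f s s) : ∀ k, Set.EqOn f^[k] g^[k] s
  | 0 => fun _ _ => rfl
  | k + 1 => fun x hx => by
    rw [Function.iterate_succ_apply, Function.iterate_succ_apply, ← h hx]
    exact h.iterate hf k (hf hx)

section Cones

lemma mem_coneOf_subtype_iff {α E : Type*} [Fintype α] [AddCommMonoid E] [Module ℝ E]
    {P : α → Prop} [DecidablePred P] [Fintype (Subtype P)] (v : α → E) {x : E} :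
    x ∈ coneOf (fun k : Subtype P => v k) ↔
      ∃ Λ : α → ℝ, (∀ a, 0 ≤ Λ a) ∧ (∀ a, ¬P a → Λ a = 0) ∧ x = ∑ a, Λ a • v a := by
  constructor
  · rintro ⟨c, hc, rfl⟩
    refine ⟨fun a => if h : P a then c ⟨a, h⟩ else 0, fun a => ?_, fun a ha => dif_neg ha,
      (sum_dite_smul c v).symm⟩
    dsimp only
    split_ifs
    exacts [hc _, le_rfl]
  · rintro ⟨Λ, hΛ, hP, rfl⟩
    exact ⟨fun k => Λ k, fun k => hΛ k,
      (sum_subtype_of_eq_zero (f := fun a => Λ a • v a) fun a ha => by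
        rw [hP a ha, zero_smul]).symm⟩

variable {ι E : Type*} [Fintype ι]

lemma Module.Basis.repr_nonneg_of_mem_coneOf [AddCommMonoid E] [Module ℝ E]
    (b : Module.Basis ι ℝ E) {x : E} (hx : x ∈ coneOf b) (i : ι) : 0 ≤ b.repr x i := by
  obtain ⟨c, hc, rfl⟩ := hx
  rw [b.repr_sum_self]
  exact hc i

lemma Module.Basis.repr_pos_of_mem_interior_coneOf [AddCommGroup E] [Module ℝ E]
    [TopologicalSpace E] [IsTopologicalAddGroup E] [ContinuousSMul ℝ E] (b : Module.Basis ι ℝ E)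
    {x : E} (hx : x ∈ interior (coneOf b)) (i : ι) : 0 < b.repr x i := by
  have hcont : Continuous fun t : ℝ => x - t • b i := by fun_prop
  have hnear : ∀ᶠ t in nhdsWithin (0 : ℝ) (Set.Ioi 0), x - t • b i ∈ interior (coneOf b) :=
    nhdsWithin_le_nhds <|
      hcont.continuousAt.preimage_mem_nhds (by simpa using isOpen_interior.mem_nhds hx)
  obtain ⟨t, ht, htpos⟩ := (hnear.and self_mem_nhdsWithin).exists
  have := b.repr_nonneg_of_mem_coneOf (interior_subset ht) i
  simp only [map_sub, map_smul, Finsupp.coe_sub, Finsupp.coe_smul, Pi.sub_apply, Pi.smul_apply,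
    Module.Basis.repr_self, Finsupp.single_eq_same, smul_eq_mul, mul_one] at this
  linarith

end Cones

namespace ArbTriangulation

section ShortestPaths

variable {V : Type*} (Λ : V × V → ℝ) (ℓ : V)

/-- The invariant of Dijkstra's algorithm after exploring `S`: `p` is a shortest-path arborescence
of `S` with distances `r`, and no explored vertex is farther than a vertex one edge beyond `S`. -/
structure IsDijkstraState (S : Finset V) (r : V → ℝ) (p : V → V) : Prop where
  root_mem : ℓ ∈ S
  apply_root : p ℓ = ℓ
  mapsTo : Set.MapsTo p S S
  iterate_card : ∀ v ∈ S, p^[S.card] v = ℓ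
  tight : ∀ v ∈ S, v ≠ ℓ → r v = r (p v) + Λ (p v, v)
  le_inside : ∀ i ∈ S, ∀ j ∈ S, r j ≤ r i + Λ (i, j)
  le_outside : ∀ i ∈ S, ∀ j ∉ S, ∀ k ∈ S, r k ≤ r i + Λ (i, j)

variable {Λ ℓ}

lemma isDijkstraState_singleton (hΛ : ∀ e, 0 ≤ Λ e) : IsDijkstraState Λ ℓ {ℓ} 0 id where
  root_mem := Finset.mem_singleton_self ℓ
  apply_root := rfl
  mapsTo := Set.mapsTo_id _
  iterate_card v hv := by simpa using hv
  tight v hv hvℓ := absurd (Finset.mem_singleton.mp hv) hvℓ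
  le_inside i _ j _ := by simpa using hΛ (i, j)
  le_outside i _ j _ k _ := by simpa using hΛ (i, j)

variable [DecidableEq V]

lemma IsDijkstraState.grow (hΛ : ∀ e, 0 ≤ Λ e) {S : Finset V} {r : V → ℝ} {p : V → V}
    (h : IsDijkstraState Λ ℓ S r p) {i₀ j₀ : V} (hi₀ : i₀ ∈ S) (hj₀ : j₀ ∉ S)
    (hmin : ∀ i ∈ S, ∀ j ∉ S, r i₀ + Λ (i₀, j₀) ≤ r i + Λ (i, j)) :
    IsDijkstraState Λ ℓ (insert j₀ S) (Function.update r j₀ (r i₀ + Λ (i₀, j₀)))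
      (Function.update p j₀ i₀) := by
  set t := r i₀ + Λ (i₀, j₀)
  have hle : ∀ k ∈ S, r k ≤ t := fun k hk => h.le_outside i₀ hi₀ j₀ hj₀ k hk
  have hne : ∀ v ∈ S, v ≠ j₀ := fun v hv h => hj₀ (h ▸ hv)
  have hpS : Set.EqOn (Function.update p j₀ i₀) p S := fun v hv =>
    Function.update_of_ne (hne v hv) _ _
  have hrS : ∀ v ∈ S, Function.update r j₀ t v = r v := fun v hv =>
    Function.update_of_ne (hne v hv) _ _
  refine ⟨Finset.mem_insert_of_mem h.root_mem, by rw [hpS h.root_mem, h.apply_root], ?_, ?_, ?_,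
    ?_, ?_⟩
  · intro v hv
    rcases Finset.mem_insert.mp hv with rfl | hv
    · simp [hi₀]
    · simpa [hpS hv] using Or.inr (h.mapsTo hv)
  · intro v hv
    rw [Finset.card_insert_of_notMem hj₀]
    rcases Finset.mem_insert.mp hv with rfl | hv
    · rw [Function.iterate_succ_apply, Function.update_self,
        ← hpS.symm.iterate h.mapsTo _ hi₀, h.iterate_card i₀ hi₀]
    · rw [Function.iterate_succ_apply', ← hpS.symm.iterate h.mapsTo _ hv,
        h.iterate_card v hv, hpS h.root_mem, h.apply_root]
  · intro v hv hvℓ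
    rcases Finset.mem_insert.mp hv with rfl | hv
    · rw [Function.update_self, Function.update_self, hrS i₀ hi₀]
    · rw [hrS v hv, hpS hv, hrS (p v) (h.mapsTo hv)]
      exact h.tight v hv hvℓ
  · intro i hi j hj
    rcases Finset.mem_insert.mp hi with hi | hi <;> rcases Finset.mem_insert.mp hj with hj | hj <;>
      simp only [hi, hj, Function.update_self, hrS _ ‹_ ∈ S›]
    · linarith [hΛ (j₀, j₀)]
    · linarith [hle j hj, hΛ (j₀, j)]
    · exact hmin i hi j₀ hj₀
    · rw [hrS i hi]
      exact h.le_inside i hi j hj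
  · intro i hi j hj k hk
    rw [Finset.mem_insert, not_or] at hj
    rcases Finset.mem_insert.mp hi with hi | hi <;> rcases Finset.mem_insert.mp hk with hk | hk <;>
      simp only [hi, hk, Function.update_self, hrS _ ‹_ ∈ S›]
    · linarith [hΛ (j₀, j)]
    · linarith [hle k hk, hΛ (j₀, j)]
    · exact hmin i hi j hj.2
    · rw [hrS i hi]
      exact h.le_outside i hi j hj.2 k hk

variable [Fintype V]

lemma IsDijkstraState.exists_insert (hΛ : ∀ e, 0 ≤ Λ e) {S : Finset V} {r : V → ℝ} {p : V → V}
    (h : IsDijkstraState Λ ℓ S r p) (hS : S ≠ Finset.univ) :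
    ∃ j ∉ S, ∃ r' p', IsDijkstraState Λ ℓ (insert j S) r' p' := by
  obtain ⟨w, hw⟩ : ∃ w, w ∉ S := by simpa [Finset.eq_univ_iff_forall] using hS
  obtain ⟨⟨i₀, j₀⟩, he₀, hmin⟩ := Finset.exists_min_image (S ×ˢ Sᶜ) (fun e => r e.1 + Λ e)
    ⟨(ℓ, w), by simp [h.root_mem, hw]⟩
  simp only [Finset.mem_product, Finset.mem_compl] at he₀
  exact ⟨j₀, he₀.2, _, _,
    h.grow hΛ he₀.1 he₀.2 fun i hi j hj => hmin (i, j) (by simp [hi, hj])⟩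

lemma exists_isDijkstraState_univ (hΛ : ∀ e, 0 ≤ Λ e) :
    ∃ r p, IsDijkstraState Λ ℓ Finset.univ r p := by
  suffices key : ∀ k (S : Finset V), Sᶜ.card = k → (∃ r p, IsDijkstraState Λ ℓ S r p) →
      ∃ r p, IsDijkstraState Λ ℓ Finset.univ r p from
    key _ {ℓ} rfl ⟨0, id, isDijkstraState_singleton hΛ⟩
  intro k
  induction k with
  | zero =>
    intro S hk hS
    rw [Finset.card_eq_zero, Finset.compl_eq_empty_iff] at hk
    rwa [hk] at hS
  | succ k ih =>
    rintro S hk ⟨r, p, h⟩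
    have hS : S ≠ Finset.univ := by
      rintro rfl
      simp at hk
    obtain ⟨j, hj, r', p', h'⟩ := h.exists_insert hΛ hS
    refine ih _ ?_ ⟨r', p', h'⟩
    rw [Finset.card_compl, Finset.card_insert_of_notMem hj]
    rw [Finset.card_compl] at hk
    omega

end ShortestPaths

section Arborescences

variable {n : ℕ} {ℓ : Fin n} {p : Fin n → Fin n}

lemma mem_arbs : p ∈ arbs n ℓ ↔ p ℓ = ℓ ∧ ∀ v, p^[n] v = ℓ := by
  simp [arbs]

lemma arbs_induction (hp : p ∈ arbs n ℓ) {P : Fin n → Prop} (root : P ℓ)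
    (step : ∀ v, v ≠ ℓ → P (p v) → P v) (v : Fin n) : P v := by
  have key : ∀ k v, P (p^[k] v) → P v := by
    intro k
    induction k with
    | zero => exact fun v h => h
    | succ k ih =>
      intro v h
      by_cases hv : v = ℓ
      · exact hv ▸ root
      · exact step v hv (ih (p v) h)
  exact key n v (by rw [(mem_arbs.mp hp).2 v]; exact root)

lemma apply_ne_self (hp : p ∈ arbs n ℓ) {v : Fin n} (hv : v ≠ ℓ) : p v ≠ v := fun h =>
  hv (by simpa [Function.iterate_fixed h] using (mem_arbs.mp hp).2 v)

lemma exists_potential {M : Type*} [AddCommGroup M] (hp : p ∈ arbs n ℓ) (w : Fin n → M) :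
    ∃ r : Fin n → M, ∀ v, v ≠ ℓ → r v = r (p v) + w v := by
  let w' := Function.update w ℓ 0
  refine ⟨fun v => ∑ k ∈ Finset.range n, w' (p^[k] v), fun v hv => ?_⟩
  have h := (Finset.sum_range_succ' (fun k => w' (p^[k] v)) n).symm.trans
    (Finset.sum_range_succ (fun k => w' (p^[k] v)) n)
  simp only [Function.iterate_succ_apply, Function.iterate_zero_apply, (mem_arbs.mp hp).2, w',
    Function.update_self, Function.update_of_ne hv, add_zero] at h
  exact h.symm

lemma diag_notMem_offEdges (i : Fin n) : (i, i) ∉ offEdges n ℓ p := by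
  simp [offEdges]

lemma treeEdge_notMem_offEdges {v : Fin n} (hv : v ≠ ℓ) : (p v, v) ∉ offEdges n ℓ p := by
  simp [offEdges, arbEdges, hv]

lemma eq_zero_of_notMem_offEdges {M : Type*} [Zero M] {Λ : Fin n × Fin n → M}
    (hdiag : ∀ i, Λ (i, i) = 0) (htree : ∀ v, v ≠ ℓ → Λ (p v, v) = 0) :
    ∀ e ∉ offEdges n ℓ p, Λ e = 0 := by
  rintro ⟨i, j⟩ he
  simp only [offEdges, arbEdges, Finset.mem_filter, Finset.mem_univ, true_and, not_and,
    not_imp_not] at he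
  by_cases hij : i = j
  · exact hij ▸ hdiag i
  · obtain ⟨rfl, hj⟩ := Classical.not_imp.mp (mt he hij)
    exact htree j hj

lemma offEdges_ne {e : Fin n × Fin n} (he : e ∈ offEdges n ℓ p) : e.1 ≠ e.2 :=
  (Finset.mem_filter.mp he).2.1

lemma mem_offEdges_of_apply_ne {q : Fin n → Fin n} (hp : p ∈ arbs n ℓ) {v : Fin n} (hv : v ≠ ℓ)
    (hpq : p v ≠ q v) : (p v, v) ∈ offEdges n ℓ q := by
  simp [offEdges, arbEdges, apply_ne_self hp hv, Ne.symm hpq]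

end Arborescences

lemma exists_shortestPathTree {n : ℕ} {Λ : Fin n × Fin n → ℝ} (hΛ : ∀ e, 0 ≤ Λ e) (ℓ : Fin n) :
    ∃ p ∈ arbs n ℓ, ∃ r : Fin n → ℝ,
      (∀ i j, r j ≤ r i + Λ (i, j)) ∧ ∀ v, v ≠ ℓ → r v = r (p v) + Λ (p v, v) := by
  obtain ⟨r, p, h⟩ := exists_isDijkstraState_univ (ℓ := ℓ) hΛ
  refine ⟨p, mem_arbs.mpr ⟨h.apply_root, fun v => ?_⟩, r,
    fun i j => h.le_inside i (Finset.mem_univ i) j (Finset.mem_univ j),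
    fun v => h.tight v (Finset.mem_univ v)⟩
  simpa using h.iterate_card v (Finset.mem_univ v)

section EdgeMatrices

variable {R : Type*} [CommRing R] {m : ℕ}

/-- The vector `f_i` of the proof sketch, with `Fin.last m` as the vertex `n`. -/
def barVec (i : Fin (m + 1)) (a : Fin m) : R :=
  if i = a.castSucc then 1 else if i = Fin.last m then -1 else 0

def edgeMat (i j : Fin (m + 1)) : Matrix (Fin m) (Fin m) R :=
  Matrix.vecMulVec (barVec i) (barVec j)

variable (R m) in
noncomputable def edgeComb :
    (Fin (m + 1) × Fin (m + 1) → R) →ₗ[R] Matrix (Fin m) (Fin m) R :=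
  Fintype.linearCombination R fun e => edgeMat e.1 e.2

lemma edgeComb_apply (Λ : Fin (m + 1) × Fin (m + 1) → R) :
    edgeComb R m Λ = ∑ e, Λ e • edgeMat e.1 e.2 :=
  Fintype.linearCombination_apply R _ Λ

lemma sum_mul_barVec (g : Fin (m + 1) → R) (a : Fin m) :
    ∑ i, g i * barVec i a = g a.castSucc - g (Fin.last m) := by
  rw [Fin.sum_univ_castSucc]
  simp [barVec, Fin.castSucc_ne_last, (Fin.castSucc_ne_last _).symm, sub_eq_add_neg]

lemma edgeComb_apply_apply (Λ : Fin (m + 1) × Fin (m + 1) → R) (a b : Fin m) :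
    edgeComb R m Λ a b = Λ (a.castSucc, b.castSucc) - Λ (a.castSucc, Fin.last m)
      - Λ (Fin.last m, b.castSucc) + Λ (Fin.last m, Fin.last m) := by
  have inner : ∀ i, ∑ j, Λ (i, j) * (barVec i a * barVec j b)
      = (Λ (i, b.castSucc) - Λ (i, Fin.last m)) * barVec i a := fun i => by
    rw [sub_mul, ← sum_mul_barVec (fun j => Λ (i, j) * barVec i a)]
    exact Finset.sum_congr rfl fun j _ => by ring
  simp only [edgeComb_apply, Matrix.sum_apply, Matrix.smul_apply, edgeMat, Matrix.vecMulVec_apply,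
    smul_eq_mul, Fintype.sum_prod_type, inner]
  rw [sum_mul_barVec (fun i => Λ (i, b.castSucc) - Λ (i, Fin.last m))]
  ring

lemma edgeComb_potential (u : Fin (m + 1) → R) : edgeComb R m (fun e => u e.1 - u e.2) = 0 := by
  ext a b
  rw [edgeComb_apply_apply]
  simp

lemma edgeComb_add_potential (Λ : Fin (m + 1) × Fin (m + 1) → R) (u : Fin (m + 1) → R) :
    edgeComb R m (fun e => Λ e + (u e.1 - u e.2)) = edgeComb R m Λ := by
  rw [show (fun e => Λ e + (u e.1 - u e.2)) = Λ + fun e => u e.1 - u e.2 from rfl, map_add,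
    edgeComb_potential, add_zero]

lemma edgeComb_eq_zero_iff {Λ : Fin (m + 1) × Fin (m + 1) → R} (hΛ : ∀ i, Λ (i, i) = 0) :
    edgeComb R m Λ = 0 ↔ ∃ u : Fin (m + 1) → R, ∀ i j, Λ (i, j) = u i - u j := by
  refine ⟨fun h => ?_, ?_⟩
  · have hsplit : ∀ a b : Fin m,
        Λ (a.castSucc, b.castSucc) = Λ (a.castSucc, Fin.last m) + Λ (Fin.last m, b.castSucc) := by
      intro a b
      have := congrFun₂ h a b
      rw [edgeComb_apply_apply, hΛ, Matrix.zero_apply] at this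
      linear_combination this
    have hlast : ∀ b : Fin m, Λ (Fin.last m, b.castSucc) = - Λ (b.castSucc, Fin.last m) := by
      intro b
      have := hsplit b b
      rw [hΛ] at this
      linear_combination -this
    refine ⟨fun i => Λ (i, Fin.last m), fun i j => ?_⟩
    induction i using Fin.lastCases <;> induction j using Fin.lastCases <;>
      simp only [hΛ, hlast, hsplit] <;> ring
  · rintro ⟨u, hu⟩
    rw [show Λ = fun e => u e.1 - u e.2 from funext fun e => hu e.1 e.2]
    exact edgeComb_potential u

lemma exists_edgeComb_eq (X : Matrix (Fin m) (Fin m) R) :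
    ∃ Λ : Fin (m + 1) × Fin (m + 1) → R, (∀ i, Λ (i, i) = 0) ∧ edgeComb R m Λ = X := by
  let pad : Fin (m + 1) → Fin (m + 1) → R := fun i j =>
    Fin.lastCases 0 (fun a => Fin.lastCases 0 (X a) j) i
  -- Subtracting a function of the column alone does not change `edgeComb`.
  refine ⟨fun e => pad e.1 e.2 - pad e.2 e.2, fun i => sub_self _, ?_⟩
  ext a b
  simp [edgeComb_apply_apply, pad]

end EdgeMatrices

section OffEdgeBasis

variable {R : Type*} [CommRing R] {m : ℕ} {ℓ : Fin (m + 1)} {p : Fin (m + 1) → Fin (m + 1)}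

lemma eq_zero_of_edgeComb_eq_zero (hp : p ∈ arbs (m + 1) ℓ) {Λ : Fin (m + 1) × Fin (m + 1) → R}
    (hsupp : ∀ e ∉ offEdges (m + 1) ℓ p, Λ e = 0) (h : edgeComb R m Λ = 0) : Λ = 0 := by
  obtain ⟨u, hu⟩ := (edgeComb_eq_zero_iff fun i => hsupp _ (diag_notMem_offEdges i)).mp h
  have hconst : ∀ v, u v = u ℓ := arbs_induction hp rfl fun v hv hpv => by
    have := hu (p v) v
    rw [hsupp _ (treeEdge_notMem_offEdges hv)] at this
    rw [← hpv]
    exact (sub_eq_zero.mp this.symm).symm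
  funext ⟨i, j⟩
  rw [hu, hconst i, hconst j, sub_self, Pi.zero_apply]

lemma exists_edgeComb_eq_of_mem_arbs (hp : p ∈ arbs (m + 1) ℓ) (X : Matrix (Fin m) (Fin m) R) :
    ∃ Λ : Fin (m + 1) × Fin (m + 1) → R,
      (∀ e ∉ offEdges (m + 1) ℓ p, Λ e = 0) ∧ edgeComb R m Λ = X := by
  obtain ⟨Λ, hdiag, hX⟩ := exists_edgeComb_eq X
  obtain ⟨r, hr⟩ := exists_potential hp fun v => Λ (p v, v)
  refine ⟨fun e => Λ e + (r e.1 - r e.2),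
    eq_zero_of_notMem_offEdges (fun i => by simp [hdiag]) fun v hv => by simp [hr v hv], ?_⟩
  rw [edgeComb_add_potential, hX]

lemma linearIndependent_edgeMat_offEdges (hp : p ∈ arbs (m + 1) ℓ) :
    LinearIndependent R fun e : {e // e ∈ offEdges (m + 1) ℓ p} => (edgeMat e.1.1 e.1.2 :
      Matrix (Fin m) (Fin m) R) := by
  refine Fintype.linearIndependent_iff.mpr fun c hc k => ?_
  have := eq_zero_of_edgeComb_eq_zero hp
    (Λ := fun e => if h : e ∈ offEdges (m + 1) ℓ p then c ⟨e, h⟩ else 0)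
    (fun e he => dif_neg he) (by rw [edgeComb_apply, sum_dite_smul, hc])
  simpa using congrFun this k

lemma span_edgeMat_offEdges (hp : p ∈ arbs (m + 1) ℓ) :
    ⊤ ≤ Submodule.span R (Set.range fun e : {e // e ∈ offEdges (m + 1) ℓ p} =>
      (edgeMat e.1.1 e.1.2 : Matrix (Fin m) (Fin m) R)) := by
  intro X _
  obtain ⟨Λ, hsupp, rfl⟩ := exists_edgeComb_eq_of_mem_arbs hp X
  rw [Submodule.mem_span_range_iff_exists_fun, edgeComb_apply]
  exact ⟨fun k => Λ k, sum_subtype_of_eq_zero (f := fun e => Λ e • edgeMat e.1 e.2)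
    fun e he => by rw [hsupp e he, zero_smul]⟩

variable (R) in
noncomputable def offEdgeBasis (hp : p ∈ arbs (m + 1) ℓ) :
    Module.Basis {e // e ∈ offEdges (m + 1) ℓ p} R (Matrix (Fin m) (Fin m) R) :=
  Module.Basis.mk (linearIndependent_edgeMat_offEdges hp) (span_edgeMat_offEdges hp)

lemma offEdgeBasis_apply (hp : p ∈ arbs (m + 1) ℓ) (e : {e // e ∈ offEdges (m + 1) ℓ p}) :
    offEdgeBasis R hp e = edgeMat e.1.1 e.1.2 :=
  Module.Basis.mk_apply _ _ e

end OffEdgeBasis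

section Triangulation

variable {m : ℕ} {ℓ : Fin (m + 1)}

lemma eq_of_edgeComb_eq {R : Type*} [CommRing R] [LinearOrder R] [IsStrictOrderedRing R]
    {p q : Fin (m + 1) → Fin (m + 1)} (hp : p ∈ arbs (m + 1) ℓ) (hq : q ∈ arbs (m + 1) ℓ)
    {Λ Λ' : Fin (m + 1) × Fin (m + 1) → R} (hΛ : ∀ e, 0 ≤ Λ e) (hΛ' : ∀ e, 0 ≤ Λ' e)
    (hsupp : ∀ e ∉ offEdges (m + 1) ℓ p, Λ e = 0) (hsupp' : ∀ e ∉ offEdges (m + 1) ℓ q, Λ' e = 0)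
    (h : edgeComb R m Λ = edgeComb R m Λ') : Λ = Λ' := by
  obtain ⟨u, hu⟩ := (edgeComb_eq_zero_iff (Λ := Λ - Λ') fun i => by
    simp [hsupp _ (diag_notMem_offEdges i), hsupp' _ (diag_notMem_offEdges i)]).mp
    (by rw [map_sub, h, sub_self])
  have hle : ∀ v, u ℓ ≤ u v := arbs_induction hp le_rfl fun v hv hpv => by
    have := hu (p v) v
    simp only [Pi.sub_apply, hsupp _ (treeEdge_notMem_offEdges hv)] at this
    linarith [hΛ' (p v, v)]
  have hge : ∀ v, u v ≤ u ℓ := arbs_induction hq le_rfl fun v hv hqv => by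
    have := hu (q v) v
    simp only [Pi.sub_apply, hsupp' _ (treeEdge_notMem_offEdges hv)] at this
    linarith [hΛ (q v, v)]
  funext ⟨i, j⟩
  have := hu i j
  rw [le_antisymm (hge i) (hle i), le_antisymm (hge j) (hle j), sub_self, Pi.sub_apply] at this
  exact sub_eq_zero.mp this

-- `m + 1 - 1` reduces to `m`, so `Mbar (m + 1) i j` and `edgeMat i j` have the same type.
lemma Mbar_eq_edgeMat {i j : Fin (m + 1)} (h : i ≠ j) :
    Mbar (m + 1) i j = (edgeMat i j : Matrix (Fin m) (Fin m) ℝ) := by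
  ext a b
  have hij : (i : ℕ) ≠ j := Fin.val_ne_of_ne h
  simp only [Mbar, Matrix.of_apply, edgeMat, Matrix.vecMulVec_apply, barVec, Fin.ext_iff,
    Fin.val_castSucc, Fin.val_last]
  split_ifs <;> first | (exfalso; omega) | ring

lemma MbarZ_eq_edgeMat {i j : Fin (m + 1)} (h : i ≠ j) :
    MbarZ (m + 1) i j = (edgeMat i j : Matrix (Fin m) (Fin m) ℤ) := by
  ext a b
  have hij : (i : ℕ) ≠ j := Fin.val_ne_of_ne h
  simp only [MbarZ, Matrix.of_apply, edgeMat, Matrix.vecMulVec_apply, barVec, Fin.ext_iff,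
    Fin.val_castSucc, Fin.val_last]
  split_ifs <;> first | (exfalso; omega) | ring

lemma sum_smul_Mbar_eq_edgeComb {Λ : Fin (m + 1) × Fin (m + 1) → ℝ} (hΛ : ∀ i, Λ (i, i) = 0) :
    ∑ e, Λ e • Mbar (m + 1) e.1 e.2 = edgeComb ℝ m Λ := by
  rw [edgeComb_apply]
  refine Finset.sum_congr rfl fun ⟨i, j⟩ _ => ?_
  by_cases h : i = j
  · simp [h, hΛ]
  · rw [Mbar_eq_edgeMat h]

lemma exists_basis_MbarZ {p : Fin (m + 1) → Fin (m + 1)} (hp : p ∈ arbs (m + 1) ℓ) :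
    ∃ b : Module.Basis {e : Fin (m + 1) × Fin (m + 1) // e ∈ offEdges (m + 1) ℓ p} ℤ
        (Matrix (Fin (m + 1 - 1)) (Fin (m + 1 - 1)) ℤ),
      ∀ e, b e = MbarZ (m + 1) e.1.1 e.1.2 :=
  ⟨offEdgeBasis ℤ hp, fun e => by rw [offEdgeBasis_apply, MbarZ_eq_edgeMat (offEdges_ne e.2)]⟩

lemma mem_coneOf_Mbar_iff {P : Fin (m + 1) × Fin (m + 1) → Prop} [DecidablePred P]
    [Fintype (Subtype P)] {x : Matrix (Fin (m + 1 - 1)) (Fin (m + 1 - 1)) ℝ} :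
    x ∈ coneOf (fun e : Subtype P => Mbar (m + 1) e.1.1 e.1.2) ↔
      ∃ Λ : Fin (m + 1) × Fin (m + 1) → ℝ, (∀ e, 0 ≤ Λ e) ∧ (∀ e, ¬P e → Λ e = 0) ∧
        x = ∑ e, Λ e • Mbar (m + 1) e.1 e.2 :=
  mem_coneOf_subtype_iff fun e : Fin (m + 1) × Fin (m + 1) => Mbar (m + 1) e.1 e.2

lemma iUnion_coneOf_offEdges (ℓ : Fin (m + 1)) :
    (⋃ p ∈ arbs (m + 1) ℓ,
        coneOf fun e : {e : Fin (m + 1) × Fin (m + 1) // e ∈ offEdges (m + 1) ℓ p} =>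
          Mbar (m + 1) e.1.1 e.1.2) =
      coneOf fun e : {e : Fin (m + 1) × Fin (m + 1) // e.1 ≠ e.2} => Mbar (m + 1) e.1.1 e.1.2 := by
  ext x
  simp only [Set.mem_iUnion, exists_prop]
  rw [mem_coneOf_Mbar_iff]
  constructor
  · rintro ⟨p, -, hx⟩
    obtain ⟨Λ, hΛ, hsupp, rfl⟩ := mem_coneOf_Mbar_iff.mp hx
    exact ⟨Λ, hΛ, fun e he => hsupp e fun h => offEdges_ne h (not_not.mp he), rfl⟩
  · rintro ⟨Λ, hΛ, hdiag, rfl⟩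
    replace hdiag : ∀ i, Λ (i, i) = 0 := fun i => hdiag _ (not_not.mpr rfl)
    obtain ⟨p, hp, r, hle, htight⟩ := exists_shortestPathTree hΛ ℓ
    let μ : Fin (m + 1) × Fin (m + 1) → ℝ := fun e => Λ e + (r e.1 - r e.2)
    have hμdiag : ∀ i, μ (i, i) = 0 := fun i => by simp [μ, hdiag]
    refine ⟨p, hp, mem_coneOf_Mbar_iff.mpr ⟨μ, fun ⟨i, j⟩ => ?_,
      eq_zero_of_notMem_offEdges hμdiag fun v hv => by simp [μ, htight v hv], ?_⟩⟩
    · linarith [hle i j]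
    · rw [sum_smul_Mbar_eq_edgeComb hdiag, sum_smul_Mbar_eq_edgeComb hμdiag,
        edgeComb_add_potential]

lemma coneOf_Mbar_eq_coneOf_offEdgeBasis {p : Fin (m + 1) → Fin (m + 1)}
    (hp : p ∈ arbs (m + 1) ℓ) :
    (coneOf fun e : {e : Fin (m + 1) × Fin (m + 1) // e ∈ offEdges (m + 1) ℓ p} =>
      Mbar (m + 1) e.1.1 e.1.2) = coneOf (offEdgeBasis ℝ hp) := by
  congr 1
  funext e
  rw [offEdgeBasis_apply, Mbar_eq_edgeMat (offEdges_ne e.2)]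

lemma exists_edgeComb_eq_of_mem_interior {p : Fin (m + 1) → Fin (m + 1)} (hp : p ∈ arbs (m + 1) ℓ)
    {x : Matrix (Fin m) (Fin m) ℝ} (hx : x ∈ interior (coneOf (offEdgeBasis ℝ hp))) :
    ∃ Λ : Fin (m + 1) × Fin (m + 1) → ℝ, (∀ e, 0 ≤ Λ e) ∧ (∀ e ∈ offEdges (m + 1) ℓ p, 0 < Λ e) ∧
      (∀ e ∉ offEdges (m + 1) ℓ p, Λ e = 0) ∧ edgeComb ℝ m Λ = x := by
  have hpos := (offEdgeBasis ℝ hp).repr_pos_of_mem_interior_coneOf hx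
  refine ⟨fun e => if h : e ∈ offEdges (m + 1) ℓ p then (offEdgeBasis ℝ hp).repr x ⟨e, h⟩ else 0,
    fun e => ?_, fun e he => by simp [he, hpos], fun e he => dif_neg he, ?_⟩
  · dsimp only
    split_ifs
    exacts [(hpos _).le, le_rfl]
  · rw [edgeComb_apply, sum_dite_smul]
    simp_rw [← offEdgeBasis_apply hp]
    exact (offEdgeBasis ℝ hp).sum_repr x

lemma interior_coneOf_inter_eq_empty {p q : Fin (m + 1) → Fin (m + 1)} (hp : p ∈ arbs (m + 1) ℓ)
    (hq : q ∈ arbs (m + 1) ℓ) (hpq : p ≠ q) :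
    interior (coneOf fun e : {e : Fin (m + 1) × Fin (m + 1) // e ∈ offEdges (m + 1) ℓ p} =>
        Mbar (m + 1) e.1.1 e.1.2) ∩
      interior (coneOf fun e : {e : Fin (m + 1) × Fin (m + 1) // e ∈ offEdges (m + 1) ℓ q} =>
        Mbar (m + 1) e.1.1 e.1.2) = ∅ := by
  rw [coneOf_Mbar_eq_coneOf_offEdgeBasis hp, coneOf_Mbar_eq_coneOf_offEdgeBasis hq,
    Set.eq_empty_iff_forall_notMem]
  rintro x ⟨hxp, hxq⟩
  obtain ⟨Λ, hΛ, -, hsupp, rfl⟩ := exists_edgeComb_eq_of_mem_interior hp hxp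
  obtain ⟨Λ', hΛ', hpos', hsupp', hΛΛ'⟩ := exists_edgeComb_eq_of_mem_interior hq hxq
  have hΛeq := eq_of_edgeComb_eq hp hq hΛ hΛ' hsupp hsupp' hΛΛ'.symm
  obtain ⟨v, hv⟩ := Function.ne_iff.mp hpq
  have hvℓ : v ≠ ℓ := by
    rintro rfl
    exact hv ((mem_arbs.mp hp).1.trans (mem_arbs.mp hq).1.symm)
  have := hpos' _ (mem_offEdges_of_apply_ne hp hvℓ hv)
  rw [← hΛeq, hsupp _ (treeEdge_notMem_offEdges hvℓ)] at this
  exact this.false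

end Triangulation

end ArbTriangulation

theorem stmt10_general (n : ℕ) (ℓ : Fin n) :
    (∀ p ∈ arbs n ℓ,
      ∃ b : Module.Basis {e : Fin n × Fin n // e ∈ offEdges n ℓ p} ℤ
          (Matrix (Fin (n - 1)) (Fin (n - 1)) ℤ),
        ∀ e, b e = MbarZ n e.1.1 e.1.2) ∧
    (⋃ p ∈ arbs n ℓ,
        coneOf fun e : {e : Fin n × Fin n // e ∈ offEdges n ℓ p} => Mbar n e.1.1 e.1.2) =
      (coneOf fun e : {e : Fin n × Fin n // e.1 ≠ e.2} => Mbar n e.1.1 e.1.2) ∧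
    ∀ p ∈ arbs n ℓ, ∀ q ∈ arbs n ℓ, p ≠ q →
      interior
          (coneOf fun e : {e : Fin n × Fin n // e ∈ offEdges n ℓ p} => Mbar n e.1.1 e.1.2) ∩
        interior
          (coneOf fun e : {e : Fin n × Fin n // e ∈ offEdges n ℓ q} => Mbar n e.1.1 e.1.2) =
      ∅ := by
  obtain ⟨m, rfl⟩ := Nat.exists_eq_add_one_of_ne_zero ℓ.pos.ne'
  exact ⟨fun p hp => ArbTriangulation.exists_basis_MbarZ hp,
    ArbTriangulation.iUnion_coneOf_offEdges ℓ,
    fun p hp q hq hpq => ArbTriangulation.interior_coneOf_inter_eq_empty hp hq hpq⟩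

theorem stmt10 (n : ℕ) (hn : 2 ≤ n) (ℓ : Fin n) :
    (∀ p ∈ arbs n ℓ,
      ∃ b : Module.Basis {e : Fin n × Fin n // e ∈ offEdges n ℓ p} ℤ
          (Matrix (Fin (n - 1)) (Fin (n - 1)) ℤ),
        ∀ e, b e = MbarZ n e.1.1 e.1.2) ∧
    (⋃ p ∈ arbs n ℓ,
        coneOf fun e : {e : Fin n × Fin n // e ∈ offEdges n ℓ p} => Mbar n e.1.1 e.1.2) =
      (coneOf fun e : {e : Fin n × Fin n // e.1 ≠ e.2} => Mbar n e.1.1 e.1.2) ∧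
    ∀ p ∈ arbs n ℓ, ∀ q ∈ arbs n ℓ, p ≠ q →
      interior
          (coneOf fun e : {e : Fin n × Fin n // e ∈ offEdges n ℓ p} => Mbar n e.1.1 e.1.2) ∩
        interior
          (coneOf fun e : {e : Fin n × Fin n // e ∈ offEdges n ℓ q} => Mbar n e.1.1 e.1.2) =
      ∅ :=
  stmt10_general n ℓ
end

section
/- Let n ≥ 2 and ℓ ∈ [n]. For every T ∈ Arb(ℓ,n) and every directed edge e between distinct vertices of [n] with e ∉ E(T), every row sum and every column sum of the n×n integer matrix W^{T,e} equals 0. -/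
open Finset

/-- The weight matrix of a directed edge `(a, b)`: `(a,b)`-entry `1`, `(b,b)`-entry `-1`. -/
def wEdge (n : ℕ) (a b : Fin n) : Matrix (Fin n) (Fin n) ℤ :=
  Matrix.single a b 1 - Matrix.single b b 1

/-- `w^T(v)`: the sum of the weights of the edges on the path from the root to `v`. -/
def wPath (n : ℕ) (p : Fin n → Fin n) (v : Fin n) : Matrix (Fin n) (Fin n) ℤ :=
  ∑ k ∈ Finset.range n, wEdge n (p (p^[k] v)) (p^[k] v)

/-- `W^{T,e} = w^T(s) - w^T(t) + w(e)` for `e = (s,t)`. -/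
def WTE (n : ℕ) (p : Fin n → Fin n) (e : Fin n × Fin n) : Matrix (Fin n) (Fin n) ℤ :=
  wPath n p e.1 - wPath n p e.2 + wEdge n e.1 e.2

open Matrix

/-
Row sums are read off as `W *ᵥ 1` and column sums as `1 ᵥ* W`. The edge weight `w(a,b)` has
column sums `0` and row-sum vector `δ_a - δ_b`, so along the path to `v` the row sums telescope
to `δ_{p^[n] v} - δ_v = δ_ℓ - δ_v`. Hence `W^{T,(s,t)}` has row-sum vector `(δ_ℓ - δ_s) - (δ_ℓ - δ_t) + (δ_s - δ_t) = 0`,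
and all its column sums vanish term by term.
-/

section

variable {n : ℕ}

lemma wEdge_mulVec_one (a b : Fin n) :
    wEdge n a b *ᵥ 1 = Pi.single a 1 - Pi.single b 1 := by
  simp [wEdge, sub_mulVec, single_mulVec_eq]

lemma one_vecMul_wEdge (a b : Fin n) : 1 ᵥ* wEdge n a b = 0 := by
  ext j
  rcases eq_or_ne b j with rfl | h <;> simp [wEdge, vecMul, dotProduct, single_apply, *]

lemma wPath_mulVec_one (p : Fin n → Fin n) (v : Fin n) :
    wPath n p v *ᵥ 1 = Pi.single (p^[n] v) 1 - Pi.single v 1 := by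
  simp only [wPath, sum_mulVec, wEdge_mulVec_one, ← Function.iterate_succ_apply' p]
  simpa using Finset.sum_range_sub (fun k => (Pi.single (p^[k] v) 1 : Fin n → ℤ)) n

lemma one_vecMul_wPath (p : Fin n → Fin n) (v : Fin n) : 1 ᵥ* wPath n p v = 0 := by
  simp [wPath, vecMul_sum, one_vecMul_wEdge]

lemma WTE_mulVec_one (p : Fin n → Fin n) (e : Fin n × Fin n) (h : p^[n] e.1 = p^[n] e.2) :
    WTE n p e *ᵥ 1 = 0 := by
  simp only [WTE, add_mulVec, sub_mulVec, wPath_mulVec_one, wEdge_mulVec_one, h]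
  abel

lemma one_vecMul_WTE (p : Fin n → Fin n) (e : Fin n × Fin n) : 1 ᵥ* WTE n p e = 0 := by
  simp [WTE, vecMul_add, vecMul_sub, one_vecMul_wPath, one_vecMul_wEdge]

end

theorem stmt11_general (n : ℕ) (ℓ : Fin n) :
    ∀ p ∈ arbs n ℓ, ∀ e ∈ offEdges n ℓ p,
      (∀ i, ∑ j, WTE n p e i j = 0) ∧ ∀ j, ∑ i, WTE n p e i j = 0 := by
  intro p hp e _
  have hroot : ∀ v, p^[n] v = ℓ := (mem_filter.1 hp).2.2
  refine ⟨fun i => ?_, fun j => ?_⟩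
  · simpa [mulVec, dotProduct] using
      congrFun (WTE_mulVec_one p e ((hroot _).trans (hroot _).symm)) i
  · simpa [vecMul, dotProduct] using congrFun (one_vecMul_WTE p e) j

theorem stmt11 (n : ℕ) (hn : 2 ≤ n) (ℓ : Fin n) :
    ∀ p ∈ arbs n ℓ, ∀ e ∈ offEdges n ℓ p,
      (∀ i, ∑ j, WTE n p e i j = 0) ∧ ∀ j, ∑ i, WTE n p e i j = 0 :=
  stmt11_general n ℓ
end

section
/- Let V ⊆ ℝ^n and W ⊆ ℝ^m be linear subspaces such that V ∩ ℤ^n spans V and W ∩ ℤ^m spans W, and let φ: ℝ^n → ℝ^m be a linear map given by an integer m×n matrix (φ_{i,j}) which maps V into W and restricts to a bijection from V ∩ ℤ^n onto W ∩ ℤ^m. Define Φ: (ℂ∖{0})^m → (ℂ∖{0})^n by Φ(y)_j := ∏_{i=1}^m y_i^{φ_{i,j}}. Let P ⊆ V be a pointed rational polyhedron (i.e., P = {x ∈ ℝ^n : Ax ≤ b} for some rational matrix A and rational vector b, and P contains no affine line). Then for every y ∈ (ℂ∖{0})^m: the family (y^β)_{β ∈ φ(P) ∩ ℤ^m} is absolutely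 summable if and only if the family (Φ(y)^α)_{α ∈ P ∩ ℤ^n} is absolutely summable, and in that case ∑_{β ∈ φ(P) ∩ ℤ^m} y^β = ∑_{α ∈ P ∩ ℤ^n} Φ(y)^α. -/
open Finset

/-- The set of integer points (the lattice `ℤ^k` inside `ℝ^k`). -/
def intPoints (k : ℕ) : Set (Fin k → ℝ) :=
  {x | ∀ i, ∃ a : ℤ, x i = (a : ℝ)}

namespace Stmt16Aux

lemma intPoints_zero (k : ℕ) : (0 : Fin k → ℝ) ∈ intPoints k := fun _ => ⟨0, by simp⟩

lemma intPoints_add {k : ℕ} {x y : Fin k → ℝ} (hx : x ∈ intPoints k) (hy : y ∈ intPoints k) :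
    x + y ∈ intPoints k := by
  intro i
  obtain ⟨a, ha⟩ := hx i
  obtain ⟨b, hb⟩ := hy i
  exact ⟨a + b, by simp [ha, hb]⟩

lemma intPoints_neg {k : ℕ} {x : Fin k → ℝ} (hx : x ∈ intPoints k) : -x ∈ intPoints k := by
  intro i
  obtain ⟨a, ha⟩ := hx i
  exact ⟨-a, by simp [ha]⟩

lemma mem_zspan {k : ℕ} {x : Fin k → ℝ} (hx : x ∈ intPoints k) :
    x ∈ Submodule.span ℤ (Set.range (Pi.basisFun ℝ (Fin k))) := by
  rw [Module.Basis.mem_span_iff_repr_mem]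
  intro i
  obtain ⟨a, ha⟩ := hx i
  exact ⟨a, by simp [ha]⟩

/-- The lattice of integer points inside a subspace `V`, as a `ℤ`-submodule of `V`. -/
noncomputable def latt {k : ℕ} (V : Submodule ℝ (Fin k → ℝ)) : Submodule ℤ V :=
  AddSubgroup.toIntSubmodule
    { carrier := {v : V | (v : Fin k → ℝ) ∈ intPoints k}
      add_mem' := fun ha hb => intPoints_add ha hb
      zero_mem' := intPoints_zero k
      neg_mem' := fun ha => intPoints_neg ha }

lemma mem_latt {k : ℕ} {V : Submodule ℝ (Fin k → ℝ)} (v : V) :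
    v ∈ latt V ↔ (v : Fin k → ℝ) ∈ intPoints k := Iff.rfl

lemma latt_discrete {k : ℕ} (V : Submodule ℝ (Fin k → ℝ)) : DiscreteTopology (latt V) := by
  have hD : DiscreteTopology (Submodule.span ℤ (Set.range (Pi.basisFun ℝ (Fin k)))) :=
    ZSpan.discreteTopology_pi_basisFun
  have hg : Continuous (fun v : latt V =>
      (⟨(v.1 : Fin k → ℝ), mem_zspan v.2⟩ :
        Submodule.span ℤ (Set.range (Pi.basisFun ℝ (Fin k))))) :=
    Continuous.subtype_mk (continuous_subtype_val.comp continuous_subtype_val) _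
  have hginj : Function.Injective (fun v : latt V =>
      (⟨(v.1 : Fin k → ℝ), mem_zspan v.2⟩ :
        Submodule.span ℤ (Set.range (Pi.basisFun ℝ (Fin k))))) := by
    intro a b h
    have h' := congrArg Subtype.val h
    exact Subtype.ext (Subtype.ext h')
  exact DiscreteTopology.of_continuous_injective hg hginj

lemma latt_span {k : ℕ} (V : Submodule ℝ (Fin k → ℝ))
    (hV : Submodule.span ℝ ((V : Set (Fin k → ℝ)) ∩ intPoints k) = V) :
    Submodule.span ℝ ((latt V : Set V)) = ⊤ := by
  apply Submodule.map_injective_of_injective (Submodule.injective_subtype V)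
  rw [Submodule.map_span, Submodule.map_top, Submodule.range_subtype]
  have himg : V.subtype '' (latt V : Set V) = (V : Set (Fin k → ℝ)) ∩ intPoints k := by
    ext x
    constructor
    · rintro ⟨v, hv, rfl⟩
      exact ⟨v.2, hv⟩
    · rintro ⟨hxV, hxI⟩
      exact ⟨⟨x, hxV⟩, hxI, rfl⟩
  rw [himg, hV]

lemma latt_finrank {k : ℕ} (V : Submodule ℝ (Fin k → ℝ))
    (hV : Submodule.span ℝ ((V : Set (Fin k → ℝ)) ∩ intPoints k) = V) :
    Module.finrank ℤ (latt V) = Module.finrank ℝ V := by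
  have h1 : DiscreteTopology (latt V) := latt_discrete V
  have h2 : ProperSpace V := FiniteDimensional.proper ℝ V
  have h3 : IsZLattice ℝ (latt V) := ⟨latt_span V hV⟩
  exact ZLattice.rank ℝ (latt V)

theorem key_inj (n m : ℕ)
    (V : Submodule ℝ (Fin n → ℝ)) (W : Submodule ℝ (Fin m → ℝ))
    (hV : Submodule.span ℝ ((V : Set (Fin n → ℝ)) ∩ intPoints n) = V)
    (hW : Submodule.span ℝ ((W : Set (Fin m → ℝ)) ∩ intPoints m) = W)
    (φ : Matrix (Fin m) (Fin n) ℤ)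
    (hφVW : ∀ x ∈ V, (fun i => ∑ j, (φ i j : ℝ) * x j) ∈ W)
    (hbij : Set.BijOn (fun (x : Fin n → ℝ) (i : Fin m) => ∑ j, (φ i j : ℝ) * x j)
      ((V : Set (Fin n → ℝ)) ∩ intPoints n) ((W : Set (Fin m → ℝ)) ∩ intPoints m)) :
    ∀ v ∈ V, (∀ i, ∑ j, (φ i j : ℝ) * v j = 0) → v = 0 := by
  classical
  set F : (Fin n → ℝ) →ₗ[ℝ] (Fin m → ℝ) :=
    Matrix.mulVecLin (φ.map (Int.cast : ℤ → ℝ)) with hFdef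
  have hF : ∀ x, F x = fun i => ∑ j, (φ i j : ℝ) * x j := by
    intro x
    funext i
    simp [hFdef, Matrix.mulVecLin_apply, Matrix.mulVec, dotProduct, Matrix.map_apply]
  have hfun : (fun (x : Fin n → ℝ) (i : Fin m) => ∑ j, (φ i j : ℝ) * x j) = F := by
    funext x
    exact (hF x).symm
  rw [hfun] at hbij
  -- the linear equivalence of lattices
  have hWmem : ∀ v : V, v ∈ latt V → F (v : Fin n → ℝ) ∈ W := by
    intro v hv
    have := hφVW (v : Fin n → ℝ) v.2
    rwa [← hF v] at this
  have hImem : ∀ v : V, v ∈ latt V → F (v : Fin n → ℝ) ∈ intPoints m := by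
    intro v hv
    exact (hbij.mapsTo ⟨v.2, hv⟩).2
  let g : latt V →+ latt W :=
    { toFun := fun v => ⟨⟨F (v.1 : Fin n → ℝ), hWmem v.1 v.2⟩, hImem v.1 v.2⟩
      map_zero' := by
        apply Subtype.ext; apply Subtype.ext
        simp
      map_add' := by
        intro a b
        apply Subtype.ext; apply Subtype.ext
        simp }
  have hginj : Function.Injective g := by
    intro a b h
    have h1 : F (a.1 : Fin n → ℝ) = F (b.1 : Fin n → ℝ) :=
      congrArg (fun z : latt W => ((z : W) : Fin m → ℝ)) h
    have := hbij.injOn ⟨a.1.2, a.2⟩ ⟨b.1.2, b.2⟩ h1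
    exact Subtype.ext (Subtype.ext this)
  have hgsurj : Function.Surjective g := by
    intro w
    obtain ⟨x, hx, hfx⟩ := hbij.surjOn ⟨w.1.2, w.2⟩
    exact ⟨⟨⟨x, hx.1⟩, hx.2⟩, Subtype.ext (Subtype.ext hfx)⟩
  have e : latt V ≃ₗ[ℤ] latt W :=
    LinearEquiv.ofBijective g.toIntLinearMap ⟨hginj, hgsurj⟩
  have hVW : Module.finrank ℝ V = Module.finrank ℝ W := by
    rw [← latt_finrank V hV, ← latt_finrank W hW]
    exact e.finrank_eq
  -- F maps V onto W
  have hmap : Submodule.map F V = W := by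
    conv_lhs => rw [← hV]
    rw [Submodule.map_span, hbij.image_eq, hW]
  -- restrict F to a linear map V →ₗ W
  have hFmem : ∀ x : V, F (x : Fin n → ℝ) ∈ W := by
    intro x
    rw [← hmap]
    exact Submodule.mem_map_of_mem x.2
  let F' : V →ₗ[ℝ] W := (F.domRestrict V).codRestrict W hFmem
  have hF'surj : Function.Surjective F' := by
    intro w
    have hw : (w : Fin m → ℝ) ∈ Submodule.map F V := by rw [hmap]; exact w.2
    obtain ⟨x, hxV, hFx⟩ := hw
    exact ⟨⟨x, hxV⟩, Subtype.ext hFx⟩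
  have hF'inj : Function.Injective F' :=
    (LinearMap.injective_iff_surjective_of_finrank_eq_finrank hVW).mpr hF'surj
  intro v hv h0
  have hFv : F v = 0 := by
    rw [hF v]
    funext i
    exact h0 i
  have : F' ⟨v, hv⟩ = 0 := by
    apply Subtype.ext
    exact hFv
  have := hF'inj (this.trans (map_zero F').symm)
  exact congrArg Subtype.val this

lemma transfer {A B : Type*} (e : A ≃ B) (f : B → ℂ) (g : A → ℂ)
    (h : ∀ a, f (e a) = g a) :
    (Summable (fun b => ‖f b‖) ↔ Summable (fun a => ‖g a‖)) ∧ (∑' b, f b = ∑' a, g a) := by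
  have h1 : (fun a => ‖f (e a)‖) = fun a => ‖g a‖ := funext fun a => congrArg norm (h a)
  have h2 : (fun a => f (e a)) = g := funext h
  constructor
  · rw [← h1]
    exact (Equiv.summable_iff e (f := fun b => ‖f b‖)).symm
  · rw [← Equiv.tsum_eq e f]
    exact tsum_congr h

lemma zpow_sum₀ {ι : Type*} (s : Finset ι) (z : ℂ) (hz : z ≠ 0) (c : ι → ℤ) :
    z ^ (∑ j ∈ s, c j) = ∏ j ∈ s, z ^ c j := by
  classical
  induction s using Finset.induction with
  | empty => simp
  | insert _ _ h ih => rw [Finset.sum_insert h, Finset.prod_insert h, zpow_add₀ hz, ih]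

end Stmt16Aux

open Stmt16Aux in
theorem stmt16 (n m : ℕ)
    (V : Submodule ℝ (Fin n → ℝ)) (W : Submodule ℝ (Fin m → ℝ))
    (hV : Submodule.span ℝ ((V : Set (Fin n → ℝ)) ∩ intPoints n) = V)
    (hW : Submodule.span ℝ ((W : Set (Fin m → ℝ)) ∩ intPoints m) = W)
    (φ : Matrix (Fin m) (Fin n) ℤ)
    (hφVW : ∀ x ∈ V, (fun i => ∑ j, (φ i j : ℝ) * x j) ∈ W)
    (hbij : Set.BijOn (fun (x : Fin n → ℝ) (i : Fin m) => ∑ j, (φ i j : ℝ) * x j)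
      ((V : Set (Fin n → ℝ)) ∩ intPoints n) ((W : Set (Fin m → ℝ)) ∩ intPoints m))
    (P : Set (Fin n → ℝ)) (hPV : P ⊆ (V : Set (Fin n → ℝ)))
    (hPrat : ∃ (k : ℕ) (A : Matrix (Fin k) (Fin n) ℚ) (b : Fin k → ℚ),
      P = {x | ∀ r, ∑ j, (A r j : ℝ) * x j ≤ (b r : ℝ)})
    (hPpointed : ¬∃ (x d : Fin n → ℝ), x ∈ P ∧ d ≠ 0 ∧ ∀ t : ℝ, x + t • d ∈ P)
    (y : Fin m → ℂ) (hy : ∀ i, y i ≠ 0) :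
    (Summable (fun β : {β : Fin m → ℤ //
          ∃ x ∈ P, (fun i => ∑ j, (φ i j : ℝ) * x j) = fun i => (β i : ℝ)} =>
        ‖∏ i, y i ^ β.1 i‖) ↔
      Summable (fun α : {α : Fin n → ℤ // (fun j => (α j : ℝ)) ∈ P} =>
        ‖∏ j, (∏ i, y i ^ φ i j) ^ α.1 j‖)) ∧
    (Summable (fun β : {β : Fin m → ℤ //
          ∃ x ∈ P, (fun i => ∑ j, (φ i j : ℝ) * x j) = fun i => (β i : ℝ)} =>
        ‖∏ i, y i ^ β.1 i‖) →
      (∑' β : {β : Fin m → ℤ //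
          ∃ x ∈ P, (fun i => ∑ j, (φ i j : ℝ) * x j) = fun i => (β i : ℝ)},
        ∏ i, y i ^ β.1 i) =
        ∑' α : {α : Fin n → ℤ // (fun j => (α j : ℝ)) ∈ P},
          ∏ j, (∏ i, y i ^ φ i j) ^ α.1 j) := by
  classical
  have hinj := key_inj n m V W hV hW φ hφVW hbij
  let tofun : {α : Fin n → ℤ // (fun j => (α j : ℝ)) ∈ P} →
      {β : Fin m → ℤ // ∃ x ∈ P, (fun i => ∑ j, (φ i j : ℝ) * x j) = fun i => (β i : ℝ)} :=
    fun α => ⟨fun i => ∑ j, φ i j * α.1 j,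
      (fun j => (α.1 j : ℝ)), α.2, by funext i; push_cast; rfl⟩
  have hto_inj : Function.Injective tofun := by
    rintro ⟨α, hα⟩ ⟨α', hα'⟩ h
    have h1 : ∀ i, ∑ j, φ i j * α j = ∑ j, φ i j * α' j :=
      fun i => congrFun (congrArg Subtype.val h) i
    have hdiff : ((fun j => (α j : ℝ)) - fun j => (α' j : ℝ)) = 0 := by
      refine hinj _ (Submodule.sub_mem V (hPV hα) (hPV hα')) ?_
      intro i
      have h2 := congrArg (Int.cast : ℤ → ℝ) (h1 i)
      push_cast at h2
      simp only [Pi.sub_apply, mul_sub, Finset.sum_sub_distrib, h2, sub_self]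
    apply Subtype.ext
    funext j
    have := congrFun hdiff j
    simp only [Pi.sub_apply, Pi.zero_apply, sub_eq_zero] at this
    exact_mod_cast this
  have hto_surj : Function.Surjective tofun := by
    rintro ⟨β, x, hxP, hx⟩
    have hxV : x ∈ V := hPV hxP
    have hmem : (fun i => ∑ j, (φ i j : ℝ) * x j) ∈ (W : Set (Fin m → ℝ)) ∩ intPoints m :=
      ⟨hφVW x hxV, by rw [hx]; exact fun i => ⟨β i, rfl⟩⟩
    obtain ⟨x', hx', hfx'⟩ := hbij.surjOn hmem
    have hxx' : x' = x := by
      have h0 : x' - x = 0 := by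
        refine hinj _ (Submodule.sub_mem V hx'.1 hxV) ?_
        intro i
        have h2 := congrFun hfx' i
        simp only [Pi.sub_apply, mul_sub, Finset.sum_sub_distrib, h2, sub_self]
      have := congrArg (· + x) h0
      simpa [sub_add_cancel] using this
    have hxI : x ∈ intPoints n := hxx' ▸ hx'.2
    choose a ha using hxI
    have hax : (fun j => (a j : ℝ)) = x := funext fun j => (ha j).symm
    refine ⟨⟨a, by rw [hax]; exact hxP⟩, ?_⟩
    apply Subtype.ext
    funext i
    have h3 := congrFun hx i
    apply (Int.cast_injective (α := ℝ))
    push_cast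
    rw [← hax] at h3
    simpa [tofun] using h3
  let e := Equiv.ofBijective tofun ⟨hto_inj, hto_surj⟩
  have hterm : ∀ α : {α : Fin n → ℤ // (fun j => (α j : ℝ)) ∈ P},
      ∏ i, y i ^ (∑ j, φ i j * α.1 j) = ∏ j, (∏ i, y i ^ φ i j) ^ α.1 j := by
    intro α
    calc ∏ i, y i ^ (∑ j, φ i j * α.1 j) = ∏ i, ∏ j, (y i ^ φ i j) ^ α.1 j := by
          refine Finset.prod_congr rfl fun i _ => ?_
          rw [zpow_sum₀ _ _ (hy i)]
          exact Finset.prod_congr rfl fun j _ => zpow_mul (y i) _ _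
      _ = ∏ j, ∏ i, (y i ^ φ i j) ^ α.1 j := Finset.prod_comm
      _ = ∏ j, (∏ i, y i ^ φ i j) ^ α.1 j :=
          Finset.prod_congr rfl fun j _ => Finset.prod_zpow _ _ _
  have htr := transfer e (fun β => ∏ i, y i ^ β.1 i)
    (fun α => ∏ j, (∏ i, y i ^ φ i j) ^ α.1 j) (fun α => hterm α)
  exact ⟨htr.1, fun _ => htr.2⟩
end

section
/- For every positive integer t, the number of 4×4 matrices with nonnegative integer entries, all of whose row sums and column sums equal t and whose (1,3), (1,4) and (2,4) entries equal 0, is 1 + (157/60)t + (949/360)t² + (4/3)t³ + (13/36)t⁴ + (1/20)t⁵ + (1/360)t⁶. (This is the Ehrhart polynomial of the Chan–Robbins–Yuen polytope CRY_4.) -/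
/-!
A lattice point `M` of `t • CRY₄` is determined by the chain of partial sums
`s = M₁₀ + M₁₁ ≤ k = s + M₂₀ ≤ j = k + M₂₁ ≤ i = j + M₃₁ ≤ t` together with the two entries
`M₁₀ ≤ s` and `M₂₂ ≤ s`, and every such datum comes from a lattice point. So the number of lattice
points is the fourth iterated prefix sum of `s ↦ (s + 1)² = C(s + 2, 2) + C(s + 1, 2)`, which the
hockey-stick identity evaluates to `C(t + 6, 6) + C(t + 5, 6)`: the `h*`-vector of `CRY₄` is `(1, 1)`.
-/

open Finset

def prefixSum (f : ℕ → ℕ) (n : ℕ) : ℕ := ∑ i ∈ range (n + 1), f i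

theorem sum_range_add_choose_succ (m n : ℕ) :
    ∑ i ∈ range (n + 1), (i + m).choose (m + 1) = (n + m + 1).choose (m + 2) := by
  induction n with
  | zero => simp
  | succ n ih =>
    rw [sum_range_succ, ih, add_right_comm n 1 m, Nat.choose_succ_succ' (n + m + 1)]
    ring

theorem prefixSum_iterate_choose_add_choose (k m n : ℕ) :
    prefixSum^[k] (fun i => (i + (m + 1)).choose (m + 1) + (i + m).choose (m + 1)) n =
      (n + (m + k + 1)).choose (m + k + 1) + (n + (m + k)).choose (m + k + 1) := by
  induction k generalizing n with
  | zero => rfl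
  | succ k ih =>
    rw [Function.iterate_succ_apply', prefixSum]
    simp only [ih, sum_add_distrib, Nat.sum_range_add_choose, sum_range_add_choose_succ]
    ring_nf

theorem succ_mul_succ_eq_choose_add_choose (s : ℕ) :
    (s + 1) * (s + 1) = (s + 2).choose 2 + (s + 1).choose 2 := by
  have h := Nat.add_one_mul_choose_eq s 1
  rw [Nat.choose_succ_succ' (s + 1) 1]
  simp only [Nat.choose_one_right] at h ⊢
  linarith

theorem cast_choose_six_add_choose_six (t : ℕ) :
    (((t + 6).choose 6 + (t + 5).choose 6 : ℕ) : ℚ) =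
      1 + 157 / 60 * t + 949 / 360 * t ^ 2 + 4 / 3 * t ^ 3 + 13 / 36 * t ^ 4 +
        1 / 20 * t ^ 5 + 1 / 360 * t ^ 6 := by
  have h₁ : (t + 1) * ((t + 2) * ((t + 3) * ((t + 4) * ((t + 5) * (t + 6))))) =
      720 * (t + 6).choose 6 := by
    simpa [Nat.descFactorial_succ, Nat.factorial] using
      Nat.descFactorial_eq_factorial_mul_choose (t + 6) 6
  have h₂ : t * ((t + 1) * ((t + 2) * ((t + 3) * ((t + 4) * (t + 5))))) =
      720 * (t + 5).choose 6 := by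
    simpa [Nat.descFactorial_succ, Nat.factorial] using
      Nat.descFactorial_eq_factorial_mul_choose (t + 5) 6
  qify at h₁ h₂
  push_cast
  linarith

def staircase (t : ℕ) : Finset (Σ _ : ℕ, Σ _ : ℕ, Σ _ : ℕ, Σ _ : ℕ, ℕ × ℕ) :=
  (range (t + 1)).sigma fun i => (range (i + 1)).sigma fun j => (range (j + 1)).sigma fun k =>
    (range (k + 1)).sigma fun s => range (s + 1) ×ˢ range (s + 1)

theorem card_staircase (t : ℕ) :
    #(staircase t) = prefixSum^[4] (fun s => (s + 1) * (s + 1)) t := by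
  simp [staircase, prefixSum]

def IsLatticePointCRY4 (t : ℕ) (M : Matrix (Fin 4) (Fin 4) ℕ) : Prop :=
  (∀ i, ∑ j, M i j = t) ∧ (∀ j, ∑ i, M i j = t) ∧ M 0 2 = 0 ∧ M 0 3 = 0 ∧ M 1 3 = 0

section Staircase

variable {t : ℕ} {M : Matrix (Fin 4) (Fin 4) ℕ} {x : Σ _ : ℕ, Σ _ : ℕ, Σ _ : ℕ, Σ _ : ℕ, ℕ × ℕ}

def toStaircase (M : Matrix (Fin 4) (Fin 4) ℕ) : Σ _ : ℕ, Σ _ : ℕ, Σ _ : ℕ, Σ _ : ℕ, ℕ × ℕ :=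
  ⟨M 1 0 + M 1 1 + M 2 0 + M 2 1 + M 3 1, M 1 0 + M 1 1 + M 2 0 + M 2 1, M 1 0 + M 1 1 + M 2 0,
    M 1 0 + M 1 1, M 1 0, M 2 2⟩

def ofStaircase (t : ℕ) :
    (Σ _ : ℕ, Σ _ : ℕ, Σ _ : ℕ, Σ _ : ℕ, ℕ × ℕ) → Matrix (Fin 4) (Fin 4) ℕ
  | ⟨i, j, k, s, c, g⟩ =>
    !![s - c + (j - k) + (i - j), t - (s - c + (j - k) + (i - j)), 0, 0;
       c, s - c, t - s, 0;
       k - s, j - k, g, t - (j - s + g);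
       t - i, i - j, s - g, j - s + g]

theorem toStaircase_mem (hM : IsLatticePointCRY4 t M) : toStaircase M ∈ staircase t := by
  obtain ⟨hrow, hcol, h₀₂, h₀₃, h₁₃⟩ := hM
  have := hrow 0; have := hrow 1; have := hrow 2; have := hcol 0; have := hcol 1; have := hcol 2
  simp only [Fin.sum_univ_four] at *
  simp only [staircase, toStaircase, mem_sigma, mem_product, mem_range]
  omega

theorem isLatticePointCRY4_ofStaircase (hx : x ∈ staircase t) :
    IsLatticePointCRY4 t (ofStaircase t x) := by
  obtain ⟨i, j, k, s, c, g⟩ := x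
  simp only [staircase, mem_sigma, mem_product, mem_range] at hx
  refine ⟨fun r => ?_, fun r => ?_, rfl, rfl, rfl⟩ <;>
    fin_cases r <;> simp [ofStaircase, Fin.sum_univ_four] <;> omega

theorem ofStaircase_toStaircase (hM : IsLatticePointCRY4 t M) :
    ofStaircase t (toStaircase M) = M := by
  obtain ⟨hrow, hcol, h₀₂, h₀₃, h₁₃⟩ := hM
  have := hrow 0; have := hrow 1; have := hrow 2; have := hrow 3
  have := hcol 0; have := hcol 1; have := hcol 2; have := hcol 3
  simp only [Fin.sum_univ_four] at *
  ext r c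
  fin_cases r <;> fin_cases c <;> simp [ofStaircase, toStaircase] <;> omega

theorem toStaircase_ofStaircase (hx : x ∈ staircase t) : toStaircase (ofStaircase t x) = x := by
  obtain ⟨i, j, k, s, c, g⟩ := x
  simp only [staircase, mem_sigma, mem_product, mem_range] at hx
  simp [ofStaircase, toStaircase]
  omega

end Staircase

def latticePointsCRY4EquivStaircase (t : ℕ) : {M // IsLatticePointCRY4 t M} ≃ staircase t where
  toFun M := ⟨toStaircase M.1, toStaircase_mem M.2⟩
  invFun x := ⟨ofStaircase t x, isLatticePointCRY4_ofStaircase x.2⟩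
  left_inv M := Subtype.ext (ofStaircase_toStaircase M.2)
  right_inv x := Subtype.ext (toStaircase_ofStaircase x.2)

theorem card_latticePointsCRY4 (t : ℕ) :
    Nat.card {M // IsLatticePointCRY4 t M} = (t + 6).choose 6 + (t + 5).choose 6 := by
  rw [Nat.card_congr (latticePointsCRY4EquivStaircase t), Nat.card_eq_finsetCard, card_staircase,
    funext succ_mul_succ_eq_choose_add_choose]
  exact prefixSum_iterate_choose_add_choose 4 1 t

theorem stmt19_general (t : ℕ) :
    (Nat.card {M : Matrix (Fin 4) (Fin 4) ℕ //
        (∀ i, ∑ j, M i j = t) ∧ (∀ j, ∑ i, M i j = t) ∧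
          M 0 2 = 0 ∧ M 0 3 = 0 ∧ M 1 3 = 0} : ℚ) =
      1 + 157 / 60 * t + 949 / 360 * t ^ 2 + 4 / 3 * t ^ 3 + 13 / 36 * t ^ 4 +
        1 / 20 * t ^ 5 + 1 / 360 * t ^ 6 :=
  (congrArg Nat.cast (card_latticePointsCRY4 t)).trans (cast_choose_six_add_choose_six t)

theorem stmt19 (t : ℕ) (ht : 0 < t) :
    (Nat.card {M : Matrix (Fin 4) (Fin 4) ℕ //
        (∀ i, ∑ j, M i j = t) ∧ (∀ j, ∑ i, M i j = t) ∧
          M 0 2 = 0 ∧ M 0 3 = 0 ∧ M 1 3 = 0} : ℚ) =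
      1 + 157 / 60 * t + 949 / 360 * t ^ 2 + 4 / 3 * t ^ 3 + 13 / 36 * t ^ 4 +
        1 / 20 * t ^ 5 + 1 / 360 * t ^ 6 :=
  stmt19_general t
end
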